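/- arXiv:2110.06054 — 4 statements merged into one kernel-verified Lean document; each statement's English description precedes it below -/
import Mathlib

section
/- For every finite simple graph without isolated vertices, all p,q ≥ 1, and every k ∈ {1,…,n}: inf { sup_{x∈S} F_p(Φ_{q/p}(x)) : S ⊂ ℝ^n∖{0} symmetric compact with γ⁻(S) ≥ k } = λ_k⁻(Δ_p), and likewise inf { sup_{x∈S} F_p(Φ_{q/p}(x)) : S ⊂ ℝ^n∖{0} symmetric compact with γ⁺(S) ≥ k } = λ_k⁺(Δ_p). That is, the min-max critical values of F_p ∘ Φ_{q/p} coincide with those of F_p. -/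
open scoped BigOperators Pointwise NNReal Classical

noncomputable section

/-! ### The graph `p`-Laplacian: Rayleigh quotients, genus, variational eigenvalues -/

/-- `Σ_{{i,j}∈E} |x_i − x_j|^p` (each unordered edge counted once). -/
def TVp {n : ℕ} (G : SimpleGraph (Fin n)) [DecidableRel G.Adj] (p : ℝ) (x : Fin n → ℝ) : ℝ :=
  (∑ i : Fin n, ∑ j : Fin n, if G.Adj i j then |x i - x j| ^ p else 0) / 2

/-- `Σ_{i∈V} deg(i)·|x_i|^p`. -/
def Np {n : ℕ} (G : SimpleGraph (Fin n)) [DecidableRel G.Adj] (p : ℝ) (x : Fin n → ℝ) : ℝ :=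
  ∑ i : Fin n, (G.degree i : ℝ) * |x i| ^ p

/-- The `p`-Rayleigh quotient `F_p`. -/
def Fp {n : ℕ} (G : SimpleGraph (Fin n)) [DecidableRel G.Adj] (p : ℝ) (x : Fin n → ℝ) : ℝ :=
  TVp G p x / Np G p x

/-- A set is (centrally) symmetric if `S = -S`. -/
def SymmSet {n : ℕ} (S : Set (Fin n → ℝ)) : Prop := ∀ x ∈ S, -x ∈ S

/-- There is a continuous odd map from `S` to the unit sphere `𝕊^{k-1} ⊂ ℝ^k`. -/
def HasOddMapToSphere {n : ℕ} (S : Set (Fin n → ℝ)) (k : ℕ) : Prop :=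
  ∃ φ : (Fin n → ℝ) → EuclideanSpace ℝ (Fin k),
    ContinuousOn φ S ∧ (∀ x ∈ S, ‖φ x‖ = 1) ∧ ∀ x ∈ S, φ (-x) = -φ x

/-- There is a continuous odd map from the unit sphere `𝕊^{k-1} ⊂ ℝ^k` to `S`. -/
def HasOddMapFromSphere {n : ℕ} (S : Set (Fin n → ℝ)) (k : ℕ) : Prop :=
  ∃ φ : EuclideanSpace ℝ (Fin k) → (Fin n → ℝ),
    ContinuousOn φ (Metric.sphere (0 : EuclideanSpace ℝ (Fin k)) 1) ∧
    (∀ x ∈ Metric.sphere (0 : EuclideanSpace ℝ (Fin k)) 1, φ x ∈ S) ∧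
    ∀ x ∈ Metric.sphere (0 : EuclideanSpace ℝ (Fin k)) 1, φ (-x) = -φ x

/-- The Krasnoselskii genus `γ⁻`. -/
def genNeg {n : ℕ} (S : Set (Fin n → ℝ)) : ℕ :=
  if S.Nonempty ∧ SymmSet S then sInf {k | 1 ≤ k ∧ HasOddMapToSphere S k} else 0

/-- The index `γ⁺`. -/
def genPos {n : ℕ} (S : Set (Fin n → ℝ)) : ℕ :=
  if S.Nonempty ∧ SymmSet S then sSup {k | 1 ≤ k ∧ HasOddMapFromSphere S k} else 0

/-- Admissible sets for the min-max principle: symmetric compact subsets of `ℝ^n∖{0}`. -/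
def Admissible {n : ℕ} (S : Set (Fin n → ℝ)) : Prop :=
  IsCompact S ∧ (0 : Fin n → ℝ) ∉ S ∧ SymmSet S

/-- The variational eigenvalues `λ_k⁻(Δ_p)`. -/
def lamNeg {n : ℕ} (G : SimpleGraph (Fin n)) [DecidableRel G.Adj] (p : ℝ) (k : ℕ) : ℝ :=
  sInf {r | ∃ S : Set (Fin n → ℝ), Admissible S ∧ k ≤ genNeg S ∧ r = sSup (Fp G p '' S)}

/-- The min-max eigenvalues `λ_k⁺(Δ_p)`. -/
def lamPos {n : ℕ} (G : SimpleGraph (Fin n)) [DecidableRel G.Adj] (p : ℝ) (k : ℕ) : ℝ :=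
  sInf {r | ∃ S : Set (Fin n → ℝ), Admissible S ∧ k ≤ genPos S ∧ r = sSup (Fp G p '' S)}

/-! ### Eigenpairs of `Δ_p` -/

/-- The set-valued sign: `Sgn(t) = {1}` if `t>0`, `[-1,1]` if `t=0`, `{-1}` if `t<0`. -/
def Sgn (t : ℝ) : Set ℝ := if 0 < t then {1} else if t < 0 then {-1} else Set.Icc (-1) 1

/-- Eigenpairs of the graph `p`-Laplacian for `p > 1`.  (Note that for `t = 0` the
expression `|t|^(p-2) * t` equals `0`, matching the convention `|t|^{p-2}t = 0`.) -/
def IsEigenpairP {n : ℕ} (G : SimpleGraph (Fin n)) [DecidableRel G.Adj] (p lam : ℝ)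
    (x : Fin n → ℝ) : Prop :=
  x ≠ 0 ∧ ∀ i, (∑ j : Fin n, if G.Adj i j then |x i - x j| ^ (p - 2) * (x i - x j) else 0) =
    lam * (G.degree i : ℝ) * (|x i| ^ (p - 2) * x i)

/-- Eigenpairs of the graph `1`-Laplacian. -/
def IsEigenpair1 {n : ℕ} (G : SimpleGraph (Fin n)) [DecidableRel G.Adj] (lam : ℝ)
    (x : Fin n → ℝ) : Prop :=
  x ≠ 0 ∧ ∃ z : Fin n → Fin n → ℝ,
    (∀ i j, G.Adj i j → z i j ∈ Sgn (x i - x j)) ∧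
    (∀ i j, G.Adj i j → z i j = -z j i) ∧
    ∀ i, (∑ j : Fin n, if G.Adj i j then z i j else 0) ∈
      (fun s => lam * (G.degree i : ℝ) * s) '' Sgn (x i)

/-- Eigenpairs of `Δ_p` for `p ≥ 1` (with the `1`-Laplacian convention at `p = 1`). -/
def IsEigenpair {n : ℕ} (G : SimpleGraph (Fin n)) [DecidableRel G.Adj] (p lam : ℝ)
    (x : Fin n → ℝ) : Prop :=
  (p = 1 ∧ IsEigenpair1 G lam x) ∨ (1 < p ∧ IsEigenpairP G p lam x)

/-! ### Cheeger constants -/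

/-- `|∂A|`: the number of edges with exactly one endpoint in `A`. -/
def eBoundary {n : ℕ} (G : SimpleGraph (Fin n)) [DecidableRel G.Adj] (A : Finset (Fin n)) : ℕ :=
  ∑ i ∈ A, ∑ j ∈ Aᶜ, if G.Adj i j then 1 else 0

/-- `vol(A) = Σ_{i∈A} deg(i)`. -/
def volG {n : ℕ} (G : SimpleGraph (Fin n)) [DecidableRel G.Adj] (A : Finset (Fin n)) : ℕ :=
  ∑ i ∈ A, G.degree i

/-- The multi-way Cheeger constants `h_k`. -/
def cheeger {n : ℕ} (G : SimpleGraph (Fin n)) [DecidableRel G.Adj] (k : ℕ) : ℝ :=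
  sInf {r | ∃ A : Fin k → Finset (Fin n), (∀ i, (A i).Nonempty) ∧
    (∀ i j, i ≠ j → Disjoint (A i) (A j)) ∧
    r = ⨆ i, (eBoundary G (A i) : ℝ) / (volG G (A i) : ℝ)}
/-! ### The map Φ -/

/-- `Φ_c(x)_i = |x_i|^c · sign(x_i)`. -/
def Phi {n : ℕ} (c : ℝ) (x : Fin n → ℝ) : Fin n → ℝ := fun i => |x i| ^ c * Real.sign (x i)

/-! ### The simplicial complex `K_n` and the modified Cheeger constants -/

/-- The vector `1_A - 1_B`. -/
def charVec {n : ℕ} (A B : Finset (Fin n)) : Fin n → ℝ :=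
  fun i => if i ∈ A then 1 else if i ∈ B then -1 else 0

/-- The inclusion order on pairs of sets: `(A,B) ≺ (A',B')` iff `A ⊆ A'` and `B ⊆ B'`. -/
def pairLE {n : ℕ} (a b : Finset (Fin n) × Finset (Fin n)) : Prop := a.1 ⊆ b.1 ∧ a.2 ⊆ b.2

/-- The geometric realization `|K(𝒜)|`: the union over all chains of elements of `𝒜` of the
convex hulls of the corresponding vectors `1_A - 1_B`. -/
def geomComplex {n : ℕ} (𝒜 : Set (Finset (Fin n) × Finset (Fin n))) : Set (Fin n → ℝ) :=
  ⋃ (C : Set (Finset (Fin n) × Finset (Fin n))) (_ : C ⊆ 𝒜) (_ : IsChain pairLE C),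
    convexHull ℝ ((fun ab => charVec ab.1 ab.2) '' C)

/-- The modified combinatorial `k`-way Cheeger constant `ĥ_k⁻`. -/
def hHatNeg {n : ℕ} (G : SimpleGraph (Fin n)) [DecidableRel G.Adj] (k : ℕ) : ℝ :=
  sInf {r | ∃ 𝒜 : Set (Finset (Fin n) × Finset (Fin n)),
    (∀ ab ∈ 𝒜, Disjoint ab.1 ab.2 ∧ (ab.1 ∪ ab.2).Nonempty) ∧
    k ≤ genNeg (geomComplex 𝒜) ∧
    r = sSup ((fun ab : Finset (Fin n) × Finset (Fin n) =>
      ((eBoundary G ab.1 : ℝ) + (eBoundary G ab.2 : ℝ)) / (volG G (ab.1 ∪ ab.2) : ℝ)) '' 𝒜)}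

/-! ### Subpartitions into cliques and the pseudo-independence number -/

/-- `c(V_i) = 1` if `|V_i| ≤ 2` and `c(V_i) = 2` if `|V_i| ≥ 3`. -/
def cOf {n : ℕ} (A : Finset (Fin n)) : ℕ := if A.card ≤ 2 then 1 else 2

/-- A subpartition of `V` into sets each inducing a complete subgraph of `G`. -/
def IsCliqueSubpartition {n : ℕ} (G : SimpleGraph (Fin n)) (P : Finset (Finset (Fin n))) : Prop :=
  (∀ A ∈ P, A.Nonempty ∧ G.IsClique (A : Set (Fin n))) ∧
    ∀ A ∈ P, ∀ B ∈ P, A ≠ B → Disjoint A B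

/-- The members of `P` are pairwise non-adjacent: every edge of `G` meets at most one of them. -/
def PairwiseNonAdjacent {n : ℕ} (G : SimpleGraph (Fin n)) (P : Finset (Finset (Fin n))) : Prop :=
  ∀ i j, G.Adj i j → ∀ A ∈ P, ∀ B ∈ P, (i ∈ A ∨ j ∈ A) → (i ∈ B ∨ j ∈ B) → A = B

/-- The pseudo-independence number `α_*(G)`. -/
def pseudoIndepNum {n : ℕ} (G : SimpleGraph (Fin n)) : ℕ :=
  sSup {m | ∃ P : Finset (Finset (Fin n)), IsCliqueSubpartition G P ∧
    PairwiseNonAdjacent G P ∧ m = ∑ A ∈ P, cOf A}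

/-- `h_*(P)`. -/
def hStar {n : ℕ} (G : SimpleGraph (Fin n)) [DecidableRel G.Adj]
    (P : Finset (Finset (Fin n))) : ℝ :=
  sInf {r | ∃ A : Finset (Fin n), A.Nonempty ∧ (∀ v ∈ A, ∃ W ∈ P, v ∈ W) ∧
    (∀ W ∈ P, (A ∩ W).card ≤ 1) ∧ r = (eBoundary G A : ℝ) / (volG G A : ℝ)}

/-! ### The set-valued 1-Laplacian and the p-Laplacian operator -/

/-- The set `Δ_1 x`. -/
def Delta1Set {n : ℕ} (G : SimpleGraph (Fin n)) [DecidableRel G.Adj] (x : Fin n → ℝ) :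
    Set (Fin n → ℝ) :=
  {v | ∃ z : Fin n → Fin n → ℝ,
    (∀ i j, G.Adj i j → z i j ∈ Sgn (x i - x j)) ∧
    (∀ i j, G.Adj i j → z i j = -z j i) ∧
    v = fun i => ∑ j : Fin n, if G.Adj i j then z i j else 0}

/-- The `p`-Laplacian `Δ_p x` for `p > 1`. -/
def DeltaP {n : ℕ} (G : SimpleGraph (Fin n)) [DecidableRel G.Adj] (p : ℝ) (x : Fin n → ℝ) :
    Fin n → ℝ :=
  fun i => ∑ j : Fin n, if G.Adj i j then |x i - x j| ^ (p - 2) * (x i - x j) else 0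

/-- The normalized eigenspace `Ŝ_λ(Δ_p)`. -/
def hatS {n : ℕ} (G : SimpleGraph (Fin n)) [DecidableRel G.Adj] (p lam : ℝ) :
    Set (Fin n → ℝ) :=
  {x | ‖x‖ = 1 ∧ IsEigenpair G p lam x}

/-! `Φ_c` is an odd homeomorphism of `ℝ^n` for `c > 0` (with inverse `Φ_{1/c}`). Admissibility
and both genera are invariant under odd homeomorphisms, so `S ↦ Φ_c(S)` is a bijection of the
admissible families of genus `≥ k` carrying the min-max values of `F_p ∘ Φ_c` to those of `F_p`. -/

namespace Real

lemma continuous_abs_rpow_mul_sign {c : ℝ} (hc : 0 < c) :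
    Continuous fun t : ℝ => |t| ^ c * sign t := by
  have hpiecewise : (fun t : ℝ => |t| ^ c * sign t) =
      fun t => if t ≤ 0 then -(-t) ^ c else t ^ c := by
    funext t
    rcases lt_trichotomy t 0 with h | rfl | h
    · simp [h.le, sign_of_neg h, abs_of_neg h]
    · simp [zero_rpow hc.ne']
    · simp [h.not_ge, sign_of_pos h, abs_of_pos h]
  rw [hpiecewise]
  refine Continuous.if_le ?_ ?_ continuous_id continuous_const fun t ht => ?_
  · exact ((continuous_neg).rpow_const fun _ => Or.inr hc.le).neg
  · exact continuous_id.rpow_const fun _ => Or.inr hc.le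
  · simp [ht, zero_rpow hc.ne']

lemma abs_rpow_mul_sign_rpow_inv {c : ℝ} (hc : c ≠ 0) (t : ℝ) :
    |(|t| ^ c * sign t)| ^ c⁻¹ * sign (|t| ^ c * sign t) = t := by
  rcases lt_trichotomy t 0 with h | rfl | h
  · have hpos : 0 < |t| ^ c := rpow_pos_of_pos (abs_pos.mpr h.ne) c
    rw [sign_of_neg h, mul_neg_one, abs_neg, abs_of_pos hpos, sign_of_neg (neg_neg_of_pos hpos),
      rpow_rpow_inv (abs_nonneg t) hc, abs_of_neg h]
    ring
  · simp [sign_zero]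
  · have hpos : 0 < |t| ^ c := rpow_pos_of_pos (abs_pos.mpr h.ne') c
    rw [sign_of_pos h, mul_one, abs_of_pos hpos, sign_of_pos hpos,
      rpow_rpow_inv (abs_nonneg t) hc, abs_of_pos h, mul_one]

end Real

section Phi

variable {n : ℕ}

lemma Phi_odd (c : ℝ) : Function.Odd (Phi (n := n) c) := by
  intro x
  funext i
  simp only [Phi, Pi.neg_apply, abs_neg, Real.sign_neg, mul_neg]

lemma Phi_inv_Phi {c : ℝ} (hc : c ≠ 0) (x : Fin n → ℝ) : Phi c⁻¹ (Phi c x) = x :=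
  funext fun i => Real.abs_rpow_mul_sign_rpow_inv hc (x i)

def phiHomeomorph {c : ℝ} (hc : 0 < c) : (Fin n → ℝ) ≃ₜ (Fin n → ℝ) where
  toFun := Phi c
  invFun := Phi c⁻¹
  left_inv := Phi_inv_Phi hc.ne'
  right_inv x := by simpa using Phi_inv_Phi (inv_ne_zero hc.ne') x
  continuous_toFun := continuous_pi fun i =>
    (Real.continuous_abs_rpow_mul_sign hc).comp (continuous_apply i)
  continuous_invFun := continuous_pi fun i =>
    (Real.continuous_abs_rpow_mul_sign (inv_pos.mpr hc)).comp (continuous_apply i)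

end Phi

section OddMaps

variable {n : ℕ} {S T : Set (Fin n → ℝ)} {f : (Fin n → ℝ) → (Fin n → ℝ)}

lemma SymmSet.image (hS : SymmSet S) (hf : Function.Odd f) : SymmSet (f '' S) := by
  rintro _ ⟨x, hx, rfl⟩
  exact ⟨-x, hS x hx, hf x⟩

lemma HasOddMapToSphere.of_mapsTo {k : ℕ} (hT : HasOddMapToSphere T k) (hf : Continuous f)
    (hodd : Function.Odd f) (hST : Set.MapsTo f S T) : HasOddMapToSphere S k := by
  obtain ⟨φ, hcont, hnorm, hφodd⟩ := hT
  refine ⟨φ ∘ f, hcont.comp hf.continuousOn hST, fun x hx => hnorm _ (hST hx), fun x hx => ?_⟩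
  rw [Function.comp_apply, hodd x, hφodd _ (hST hx), Function.comp_apply]

lemma HasOddMapFromSphere.map {k : ℕ} (hS : HasOddMapFromSphere S k) (hf : Continuous f)
    (hodd : Function.Odd f) (hST : Set.MapsTo f S T) : HasOddMapFromSphere T k := by
  obtain ⟨φ, hcont, hmem, hφodd⟩ := hS
  refine ⟨f ∘ φ, hf.comp_continuousOn hcont, fun x hx => hST (hmem x hx), fun x hx => ?_⟩
  rw [Function.comp_apply, hφodd x hx, hodd, Function.comp_apply]

end OddMaps

namespace Homeomorph

variable {n : ℕ} (e : (Fin n → ℝ) ≃ₜ (Fin n → ℝ)) (S : Set (Fin n → ℝ))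

lemma odd_symm (he : Function.Odd e) : Function.Odd e.symm := fun x =>
  e.injective (by rw [apply_symm_apply, he, apply_symm_apply])

lemma symmSet_image_iff (he : Function.Odd e) : SymmSet (e '' S) ↔ SymmSet S := by
  refine ⟨fun h => ?_, fun h => h.image he⟩
  simpa [Set.image_image] using h.image (e.odd_symm he)

lemma admissible_image_iff (he : Function.Odd e) : Admissible (e '' S) ↔ Admissible S := by
  have hzero : (0 : Fin n → ℝ) ∈ e '' S ↔ 0 ∈ S := by
    simpa [he.map_zero] using e.injective.mem_set_image (a := 0) (s := S)
  simp only [Admissible, e.isCompact_image, hzero, e.symmSet_image_iff S he]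

lemma hasOddMapToSphere_image_iff (he : Function.Odd e) (k : ℕ) :
    HasOddMapToSphere (e '' S) k ↔ HasOddMapToSphere S k := by
  refine ⟨fun h => h.of_mapsTo e.continuous he (Set.mapsTo_image e S), fun h => ?_⟩
  refine h.of_mapsTo e.symm.continuous (e.odd_symm he) ?_
  rintro _ ⟨x, hx, rfl⟩
  simpa using hx

lemma hasOddMapFromSphere_image_iff (he : Function.Odd e) (k : ℕ) :
    HasOddMapFromSphere (e '' S) k ↔ HasOddMapFromSphere S k := by
  refine ⟨fun h => h.map e.symm.continuous (e.odd_symm he) ?_,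
    fun h => h.map e.continuous he (Set.mapsTo_image e S)⟩
  rintro _ ⟨x, hx, rfl⟩
  simpa using hx

lemma genNeg_image (he : Function.Odd e) : genNeg (e '' S) = genNeg S := by
  simp only [genNeg, Set.image_nonempty, e.symmSet_image_iff S he,
    e.hasOddMapToSphere_image_iff S he]

lemma genPos_image (he : Function.Odd e) : genPos (e '' S) = genPos S := by
  simp only [genPos, Set.image_nonempty, e.symmSet_image_iff S he,
    e.hasOddMapFromSphere_image_iff S he]

end Homeomorph

def minimaxValues {n : ℕ} (γ : Set (Fin n → ℝ) → ℕ) (F : (Fin n → ℝ) → ℝ) (k : ℕ) : Set ℝ :=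
  {r | ∃ S : Set (Fin n → ℝ), Admissible S ∧ k ≤ γ S ∧ r = sSup (F '' S)}

lemma minimaxValues_comp_homeomorph {n : ℕ} {γ : Set (Fin n → ℝ) → ℕ}
    (e : (Fin n → ℝ) ≃ₜ (Fin n → ℝ)) (he : Function.Odd e) (hγ : ∀ S, γ (e '' S) = γ S)
    (F : (Fin n → ℝ) → ℝ) (k : ℕ) :
    minimaxValues γ (F ∘ e) k = minimaxValues γ F k := by
  ext r
  constructor
  · rintro ⟨S, hS, hk, rfl⟩
    exact ⟨e '' S, (e.admissible_image_iff S he).mpr hS, (hγ S).symm ▸ hk, by rw [Set.image_comp]⟩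
  · rintro ⟨S, hS, hk, rfl⟩
    have hS' : e '' (e.symm '' S) = S := e.toEquiv.image_symm_image S
    refine ⟨e.symm '' S, ?_, ?_, ?_⟩
    · rwa [← e.admissible_image_iff _ he, hS']
    · rwa [← hγ, hS']
    · rw [Set.image_comp, hS']

theorem stmt14_general {n : ℕ} (G : SimpleGraph (Fin n)) [DecidableRel G.Adj]
    (p q : ℝ) (hp : 1 ≤ p) (hq : 1 ≤ q)
    (k : ℕ) :
    sInf {r | ∃ S : Set (Fin n → ℝ), Admissible S ∧ k ≤ genNeg S ∧
        r = sSup ((fun x => Fp G p (Phi (q / p) x)) '' S)} = lamNeg G p k ∧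
    sInf {r | ∃ S : Set (Fin n → ℝ), Admissible S ∧ k ≤ genPos S ∧
        r = sSup ((fun x => Fp G p (Phi (q / p) x)) '' S)} = lamPos G p k := by
  have hc : 0 < q / p := div_pos (by linarith) (by linarith)
  set Φ := phiHomeomorph (n := n) hc
  have hΦ : Function.Odd Φ := Phi_odd (q / p)
  -- each side unfolds to `sInf (minimaxValues γ F k)`, with `F = Fp G p ∘ Φ` on the left
  exact ⟨congrArg sInf (minimaxValues_comp_homeomorph Φ hΦ (Φ.genNeg_image · hΦ) (Fp G p) k),
    congrArg sInf (minimaxValues_comp_homeomorph Φ hΦ (Φ.genPos_image · hΦ) (Fp G p) k)⟩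

/-- **The min-max critical values of `F_p ∘ Φ_{q/p}` coincide with `λ_k^±(Δ_p)`.** -/
theorem stmt14 {n : ℕ} (G : SimpleGraph (Fin n)) [DecidableRel G.Adj]
    (hdeg : ∀ i, 0 < G.degree i) (p q : ℝ) (hp : 1 ≤ p) (hq : 1 ≤ q)
    (k : ℕ) (hk1 : 1 ≤ k) (hkn : k ≤ n) :
    sInf {r | ∃ S : Set (Fin n → ℝ), Admissible S ∧ k ≤ genNeg S ∧
        r = sSup ((fun x => Fp G p (Phi (q / p) x)) '' S)} = lamNeg G p k ∧
    sInf {r | ∃ S : Set (Fin n → ℝ), Admissible S ∧ k ≤ genPos S ∧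
        r = sSup ((fun x => Fp G p (Phi (q / p) x)) '' S)} = lamPos G p k :=
  stmt14_general G p q hp hq k
end
end

section
/- For every finite simple graph without isolated vertices, all reals 1 ≤ p ≤ q, and every x ∈ ℝ^n∖{0}: p·(2·F_p(Φ_{q/p}(x)))^{1/p} ≤ q·(2·F_q(x))^{1/q}, which is equivalent to F_p(Φ_{q/p}(x)) ≤ 2^{p/q−1}·(q/p)^p·F_q(x)^{p/q}. Moreover, if p < q and F_q(x) > 0, then the inequality is strict. -/
open scoped BigOperators Pointwise NNReal Classical

noncomputable section

/-! Write `c = q / p` and `φ(t) = |t|^c sign t`. The heart of the matter is the two-point inequality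
`|φ(u) - φ(v)| ≤ c |u - v| M_c(u, v)^(c - 1)` with the power mean
`M_c(u, v) = ((|u|^c + |v|^c) / 2)^(1/c)`. For `u, v` of the same sign it is the Hermite–Hadamard
inequality for the convex derivative of the concave function `s ↦ s^(1/c)`, applied on
`[|v|^c, |u|^c]`; for opposite signs it follows from `(|u|^c + |v|^c)^(1/c) ≤ |u| + |v|` and
`2^(1 - 1/c) ≤ c`. Raising it to the power `p`, bounding `M_c ≤ M_q` and summing over the edges
with Hölder's inequality for the exponents `q/p` and `q/(q-p)` gives
`2 F_p(Φ x) ≤ (q/p)^p (2 F_q(x))^(p/q)`, which is both forms of the claim. Everything is strict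
when `c > 1` and `u ≠ v`, and `F_q(x) > 0` provides an edge with `x_i ≠ x_j`. -/

open Finset Real

lemma two_mul_rpow_lt_rpow_add_add_rpow_sub {k w d : ℝ} (hk : k < 0) (hd : 0 < d)
    (hdw : d < w) : 2 * w ^ k < (w + d) ^ k + (w - d) ^ k := by
  have hw : 0 < w := hd.trans hdw
  have rpow_eq_sq_rpow_half : ∀ t : ℝ, 0 ≤ t → t ^ k = (t ^ (k / 2)) ^ 2 := fun t ht => by
    rw [← rpow_natCast, ← rpow_mul ht]; norm_num
  have hw' : w ^ k = (w ^ 2) ^ (k / 2) := by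
    rw [← rpow_natCast, ← rpow_mul hw.le]; ring_nf
  have hprod : w ^ k < (w + d) ^ (k / 2) * (w - d) ^ (k / 2) := by
    rw [hw', ← mul_rpow (by linarith) (by linarith)]
    exact rpow_lt_rpow_of_neg (by nlinarith) (by nlinarith) (by linarith)
  rw [rpow_eq_sq_rpow_half (w + d) (by linarith), rpow_eq_sq_rpow_half (w - d) (by linarith)]
  nlinarith [two_mul_le_add_sq ((w + d) ^ (k / 2)) ((w - d) ^ (k / 2))]

lemma two_mul_mul_rpow_lt_rpow_add_sub_rpow_sub {m w d : ℝ} (hm0 : 0 < m) (hm1 : m < 1)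
    (hd : 0 < d) (hdw : d ≤ w) : 2 * m * d * w ^ (m - 1) < (w + d) ^ m - (w - d) ^ m := by
  let g : ℝ → ℝ := fun t => (w + t) ^ m - (w - t) ^ m - 2 * m * t * w ^ (m - 1)
  have hg : StrictMonoOn g (Set.Icc 0 w) := by
    refine strictMonoOn_of_deriv_pos (convex_Icc 0 w) ?_ fun t ht => ?_
    · have := continuous_rpow_const hm0.le
      fun_prop
    rw [interior_Icc] at ht
    have hderiv : HasDerivAt g
        (m * (w + t) ^ (m - 1) + m * (w - t) ^ (m - 1) - 2 * m * w ^ (m - 1)) t := by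
      have h₁ := ((hasDerivAt_id' t).const_add w).rpow_const (p := m)
        (Or.inl (by linarith [ht.1] : 0 < w + t).ne')
      have h₂ := ((hasDerivAt_id' t).const_sub w).rpow_const (p := m)
        (Or.inl (by linarith [ht.2] : 0 < w - t).ne')
      exact ((h₁.sub h₂).sub (((hasDerivAt_id' t).const_mul (2 * m)).mul_const
        (w ^ (m - 1)))).congr_deriv (by ring)
    rw [hderiv.deriv]
    have := two_mul_rpow_lt_rpow_add_add_rpow_sub (by linarith : m - 1 < 0) ht.1 ht.2
    nlinarith
  have := hg ⟨le_rfl, hd.le.trans hdw⟩ ⟨hd.le, hdw⟩ hd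
  simpa [g] using this

lemma rpow_sub_rpow_lt_mul_rpow_mean {c u v : ℝ} (hc : 1 < c) (hv : 0 ≤ v) (hvu : v < u) :
    u ^ c - v ^ c < c * (u - v) * ((u ^ c + v ^ c) / 2) ^ (1 - c⁻¹) := by
  have hc0 : 0 < c := by linarith
  have hlt : v ^ c < u ^ c := rpow_lt_rpow hv hvu hc0
  have hw : 0 < (u ^ c + v ^ c) / 2 := by linarith [rpow_nonneg hv c]
  have key := two_mul_mul_rpow_lt_rpow_add_sub_rpow_sub (m := c⁻¹) (inv_pos.2 hc0)
    (inv_lt_one_of_one_lt₀ hc) (w := (u ^ c + v ^ c) / 2) (d := (u ^ c - v ^ c) / 2)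
    (by linarith) (by linarith [rpow_nonneg hv c])
  rw [show (u ^ c + v ^ c) / 2 + (u ^ c - v ^ c) / 2 = u ^ c by ring,
    show (u ^ c + v ^ c) / 2 - (u ^ c - v ^ c) / 2 = v ^ c by ring,
    rpow_rpow_inv (hv.trans hvu.le) hc0.ne', rpow_rpow_inv hv hc0.ne',
    show c⁻¹ - 1 = -(1 - c⁻¹) by ring, rpow_neg hw.le] at key
  set W := ((u ^ c + v ^ c) / 2) ^ (1 - c⁻¹)
  have hW : 0 < W := rpow_pos_of_pos hw _
  calc u ^ c - v ^ c = c * W * (2 * c⁻¹ * ((u ^ c - v ^ c) / 2) * W⁻¹) := by field_simp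
    _ < c * W * (u - v) := mul_lt_mul_of_pos_left key (by positivity)
    _ = c * (u - v) * W := by ring

lemma rpow_add_rpow_lt_mul_rpow_mean {c u w : ℝ} (hc : 1 < c) (hu : 0 ≤ u) (hw : 0 ≤ w)
    (huw : 0 < u + w) : u ^ c + w ^ c < c * (u + w) * ((u ^ c + w ^ c) / 2) ^ (1 - c⁻¹) := by
  have hc0 : 0 < c := by linarith
  set S := u ^ c + w ^ c
  have hS : 0 < S := by
    rcases hu.eq_or_lt with rfl | hu'
    · simpa [S, zero_rpow hc0.ne'] using rpow_pos_of_pos (by linarith : 0 < w) c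
    · exact add_pos_of_pos_of_nonneg (rpow_pos_of_pos hu' c) (rpow_nonneg hw c)
  have hroot : S ^ c⁻¹ ≤ u + w := by simpa [one_div] using rpow_add_rpow_le_add hu hw hc.le
  have htwo : 1 < c * (1 / 2) ^ (1 - c⁻¹) := by
    simpa [zero_rpow hc0.ne'] using rpow_sub_rpow_lt_mul_rpow_mean hc le_rfl zero_lt_one
  calc S = S ^ c⁻¹ * S ^ (1 - c⁻¹) := by rw [← rpow_add hS]; norm_num
    _ ≤ (u + w) * S ^ (1 - c⁻¹) := by gcongr
    _ < (u + w) * S ^ (1 - c⁻¹) * (c * (1 / 2) ^ (1 - c⁻¹)) := by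
      apply lt_mul_of_one_lt_right (by positivity) htwo
    _ = c * (u + w) * (S / 2) ^ (1 - c⁻¹) := by
      rw [div_eq_mul_one_div S, mul_rpow hS.le (by norm_num)]; ring

lemma rpow_mul_rpow_one_sub_div {a N θ : ℝ} (ha : 0 ≤ a) (hN : 0 ≤ N) (hθ : θ ≠ 0) :
    a ^ θ * N ^ (1 - θ) / N = (a / N) ^ θ := by
  rcases hN.eq_or_lt with rfl | hN
  · simp [zero_rpow hθ]
  rw [div_rpow ha hN.le, rpow_sub hN, rpow_one]
  field_simp

def signedRpow (c t : ℝ) : ℝ := |t| ^ c * Real.sign t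

lemma Phi_apply {n : ℕ} (c : ℝ) (x : Fin n → ℝ) (i : Fin n) :
    Phi c x i = signedRpow c (x i) := rfl

section signedRpow

variable {c t : ℝ}

lemma signedRpow_of_nonneg (hc : c ≠ 0) (ht : 0 ≤ t) : signedRpow c t = t ^ c := by
  rcases ht.eq_or_lt with rfl | ht
  · simp [signedRpow, zero_rpow hc]
  · rw [signedRpow, abs_of_pos ht, Real.sign_of_pos ht, mul_one]

lemma signedRpow_of_nonpos (hc : c ≠ 0) (ht : t ≤ 0) : signedRpow c t = -(-t) ^ c := by
  rw [← signedRpow_of_nonneg hc (neg_nonneg.2 ht), signedRpow, signedRpow, abs_neg,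
    Real.sign_neg, mul_neg, neg_neg]

lemma signedRpow_one (t : ℝ) : signedRpow 1 t = t := by
  rcases le_total 0 t with ht | ht
  · rw [signedRpow_of_nonneg one_ne_zero ht, rpow_one]
  · rw [signedRpow_of_nonpos one_ne_zero ht, rpow_one, neg_neg]

lemma abs_signedRpow (hc : c ≠ 0) (t : ℝ) : |signedRpow c t| = |t| ^ c := by
  rcases le_total 0 t with ht | ht
  · rw [signedRpow_of_nonneg hc ht, abs_of_nonneg ht, abs_of_nonneg (rpow_nonneg ht c)]
  · rw [signedRpow_of_nonpos hc ht, abs_neg, abs_of_nonpos ht,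
      abs_of_nonneg (rpow_nonneg (neg_nonneg.2 ht) c)]

end signedRpow

lemma abs_signedRpow_sub_lt_of_lt {c u v : ℝ} (hc : 1 < c) (hvu : v < u) :
    |signedRpow c u - signedRpow c v| < c * (u - v) * ((|u| ^ c + |v| ^ c) / 2) ^ (1 - c⁻¹) := by
  have hc0 : c ≠ 0 := by positivity
  rcases le_or_gt 0 v with hv | hv
  · have hu := hv.trans hvu.le
    rw [signedRpow_of_nonneg hc0 hu, signedRpow_of_nonneg hc0 hv, abs_of_nonneg hu,
      abs_of_nonneg hv, abs_of_pos (sub_pos.2 (rpow_lt_rpow hv hvu (by positivity)))]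
    exact rpow_sub_rpow_lt_mul_rpow_mean hc hv hvu
  rcases le_or_gt u 0 with hu | hu
  · have key := rpow_sub_rpow_lt_mul_rpow_mean hc (neg_nonneg.2 hu) (neg_lt_neg hvu)
    have hlt := rpow_lt_rpow (neg_nonneg.2 hu) (neg_lt_neg hvu) (by positivity : 0 < c)
    rw [signedRpow_of_nonpos hc0 hu, signedRpow_of_nonpos hc0 hv.le, abs_of_nonpos hu,
      abs_of_neg hv, abs_of_pos (by linarith), add_comm]
    linarith
  · have key := rpow_add_rpow_lt_mul_rpow_mean hc hu.le (neg_nonneg.2 hv.le) (by linarith)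
    rw [signedRpow_of_nonneg hc0 hu.le, signedRpow_of_nonpos hc0 hv.le, abs_of_pos hu,
      abs_of_neg hv, sub_neg_eq_add, abs_of_pos (add_pos_of_pos_of_nonneg
        (rpow_pos_of_pos hu c) (rpow_nonneg (neg_nonneg.2 hv.le) c)), sub_eq_add_neg]
    exact key

lemma abs_signedRpow_sub_lt {c u v : ℝ} (hc : 1 < c) (huv : u ≠ v) :
    |signedRpow c u - signedRpow c v| < c * |u - v| * ((|u| ^ c + |v| ^ c) / 2) ^ (1 - c⁻¹) := by
  rcases huv.lt_or_gt with h | h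
  · rw [abs_sub_comm, abs_sub_comm u, abs_of_pos (sub_pos.2 h), add_comm]
    exact abs_signedRpow_sub_lt_of_lt hc h
  · rw [abs_of_pos (sub_pos.2 h)]
    exact abs_signedRpow_sub_lt_of_lt hc h

lemma abs_signedRpow_sub_le {c : ℝ} (hc : 1 ≤ c) (u v : ℝ) :
    |signedRpow c u - signedRpow c v| ≤ c * |u - v| * ((|u| ^ c + |v| ^ c) / 2) ^ (1 - c⁻¹) := by
  rcases hc.eq_or_lt with rfl | hc
  · simp [signedRpow_one]
  rcases eq_or_ne u v with rfl | huv
  · simp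
  exact (abs_signedRpow_sub_lt hc huv).le

lemma rpow_mul_mean_rpow_le {p q : ℝ} (hp : 1 ≤ p) (hpq : p ≤ q) (u v : ℝ) :
    (q / p * |u - v| * ((|u| ^ (q / p) + |v| ^ (q / p)) / 2) ^ (1 - (q / p)⁻¹)) ^ p ≤
      (q / p) ^ p * ((|u - v| ^ q) ^ (p / q) * ((|u| ^ q + |v| ^ q) / 2) ^ (1 - p / q)) := by
  have hp0 : 0 < p := by linarith
  have hq0 : 0 < q := by linarith
  set A := (|u| ^ (q / p) + |v| ^ (q / p)) / 2
  have hA : 0 ≤ A := by positivity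
  have hpow : ∀ t : ℝ, 0 ≤ t → (t ^ (q / p)) ^ p = t ^ q := fun t ht => by
    rw [← rpow_mul ht, div_mul_cancel₀ q hp0.ne']
  have jensen : A ^ p ≤ (|u| ^ q + |v| ^ q) / 2 := by
    have := (convexOn_rpow hp).2 (rpow_nonneg (abs_nonneg u) (q / p))
      (rpow_nonneg (abs_nonneg v) (q / p)) (by norm_num : (0 : ℝ) ≤ 1 / 2)
      (by norm_num : (0 : ℝ) ≤ 1 / 2) (by norm_num)
    simp only [smul_eq_mul, hpow _ (abs_nonneg _)] at this
    calc A ^ p = (1 / 2 * |u| ^ (q / p) + 1 / 2 * |v| ^ (q / p)) ^ p := by simp only [A]; ring_nf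
      _ ≤ 1 / 2 * |u| ^ q + 1 / 2 * |v| ^ q := this
      _ = (|u| ^ q + |v| ^ q) / 2 := by ring
  have e1 : (A ^ (1 - (q / p)⁻¹)) ^ p = (A ^ p) ^ (1 - p / q) := by
    rw [← rpow_mul hA, ← rpow_mul hA, inv_div, mul_comm]
  have e2 : (|u - v| ^ q) ^ (p / q) = |u - v| ^ p := by
    rw [← rpow_mul (abs_nonneg _), mul_div_cancel₀ p hq0.ne']
  have hpq' : 0 ≤ 1 - p / q := sub_nonneg.2 ((div_le_one hq0).2 hpq)
  rw [mul_rpow (by positivity) (by positivity), mul_rpow (by positivity) (abs_nonneg _), e1, e2,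
    mul_assoc]
  gcongr

lemma abs_signedRpow_sub_rpow_le {p q : ℝ} (hp : 1 ≤ p) (hpq : p ≤ q) (u v : ℝ) :
    |signedRpow (q / p) u - signedRpow (q / p) v| ^ p ≤
      (q / p) ^ p * ((|u - v| ^ q) ^ (p / q) * ((|u| ^ q + |v| ^ q) / 2) ^ (1 - p / q)) :=
  (rpow_le_rpow (abs_nonneg _) (abs_signedRpow_sub_le ((one_le_div₀ (by linarith)).2 hpq) u v)
    (by linarith)).trans (rpow_mul_mean_rpow_le hp hpq u v)

lemma abs_signedRpow_sub_rpow_lt {p q : ℝ} (hp : 1 ≤ p) (hpq : p < q) {u v : ℝ} (huv : u ≠ v) :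
    |signedRpow (q / p) u - signedRpow (q / p) v| ^ p <
      (q / p) ^ p * ((|u - v| ^ q) ^ (p / q) * ((|u| ^ q + |v| ^ q) / 2) ^ (1 - p / q)) :=
  (rpow_lt_rpow (abs_nonneg _) (abs_signedRpow_sub_lt ((one_lt_div (by linarith)).2 hpq) huv)
    (by linarith)).trans_le (rpow_mul_mean_rpow_le hp hpq.le u v)

lemma sum_rpow_mul_rpow_le {ι : Type*} (s : Finset ι) {f g : ι → ℝ} {θ : ℝ}
    (hf : ∀ i ∈ s, 0 ≤ f i) (hg : ∀ i ∈ s, 0 ≤ g i) (hθ0 : 0 < θ) (hθ1 : θ ≤ 1) :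
    ∑ i ∈ s, f i ^ θ * g i ^ (1 - θ) ≤ (∑ i ∈ s, f i) ^ θ * (∑ i ∈ s, g i) ^ (1 - θ) := by
  rcases hθ1.eq_or_lt with rfl | hθ1
  · simp
  have h := inner_le_Lp_mul_Lq_of_nonneg s (holderConjugate_one_div hθ0 (sub_pos.2 hθ1) (by ring))
    (fun i hi => rpow_nonneg (hf i hi) θ) (fun i hi => rpow_nonneg (hg i hi) (1 - θ))
  simp only [one_div] at h
  rwa [sum_congr rfl fun i hi => rpow_rpow_inv (hf i hi) hθ0.ne',
    sum_congr rfl fun i hi => rpow_rpow_inv (hg i hi) (sub_pos.2 hθ1).ne', inv_inv, inv_inv] at h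

section Sums

variable {ι : Type*} (s : Finset ι) (U V : ι → ℝ) {p q : ℝ}

lemma sum_mul_rpow_mul_rpow_le (hp : 1 ≤ p) (hpq : p ≤ q) :
    ∑ e ∈ s, (q / p) ^ p *
        ((|U e - V e| ^ q) ^ (p / q) * ((|U e| ^ q + |V e| ^ q) / 2) ^ (1 - p / q)) ≤
      (q / p) ^ p * ((∑ e ∈ s, |U e - V e| ^ q) ^ (p / q) *
        (∑ e ∈ s, (|U e| ^ q + |V e| ^ q) / 2) ^ (1 - p / q)) := by
  have hq0 : 0 < q := by linarith
  rw [← mul_sum]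
  gcongr
  exact sum_rpow_mul_rpow_le s (fun e _ => by positivity) (fun e _ => by positivity)
    (by positivity) ((div_le_one hq0).2 hpq)

lemma sum_abs_signedRpow_sub_rpow_le (hp : 1 ≤ p) (hpq : p ≤ q) :
    ∑ e ∈ s, |signedRpow (q / p) (U e) - signedRpow (q / p) (V e)| ^ p ≤
      (q / p) ^ p * ((∑ e ∈ s, |U e - V e| ^ q) ^ (p / q) *
        (∑ e ∈ s, (|U e| ^ q + |V e| ^ q) / 2) ^ (1 - p / q)) :=
  (sum_le_sum fun e _ => abs_signedRpow_sub_rpow_le hp hpq (U e) (V e)).trans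
    (sum_mul_rpow_mul_rpow_le s U V hp hpq)

lemma sum_abs_signedRpow_sub_rpow_lt (hp : 1 ≤ p) (hpq : p < q) {e₀ : ι} (he₀ : e₀ ∈ s)
    (hUV : U e₀ ≠ V e₀) :
    ∑ e ∈ s, |signedRpow (q / p) (U e) - signedRpow (q / p) (V e)| ^ p <
      (q / p) ^ p * ((∑ e ∈ s, |U e - V e| ^ q) ^ (p / q) *
        (∑ e ∈ s, (|U e| ^ q + |V e| ^ q) / 2) ^ (1 - p / q)) :=
  (sum_lt_sum (fun e _ => abs_signedRpow_sub_rpow_le hp hpq.le (U e) (V e))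
    ⟨e₀, he₀, abs_signedRpow_sub_rpow_lt hp hpq hUV⟩).trans_le
    (sum_mul_rpow_mul_rpow_le s U V hp hpq.le)

end Sums

section Graph

variable {V : Type*} [Fintype V] (G : SimpleGraph V) [DecidableRel G.Adj]

def adjPairs : Finset (V × V) := {e | G.Adj e.1 e.2}

lemma sum_adjPairs (f : V → V → ℝ) :
    ∑ e ∈ adjPairs G, f e.1 e.2 = ∑ i, ∑ j, if G.Adj i j then f i j else 0 := by
  rw [adjPairs, sum_filter, Fintype.sum_prod_type]

lemma sum_adjPairs_fst (g : V → ℝ) : ∑ e ∈ adjPairs G, g e.1 = ∑ i, (G.degree i : ℝ) * g i := by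
  rw [sum_adjPairs G fun i _ => g i]
  refine sum_congr rfl fun i _ => ?_
  rw [← sum_filter, sum_const, ← SimpleGraph.neighborFinset_eq_filter,
    SimpleGraph.card_neighborFinset_eq_degree, nsmul_eq_mul]

lemma sum_adjPairs_snd (g : V → ℝ) : ∑ e ∈ adjPairs G, g e.2 = ∑ e ∈ adjPairs G, g e.1 := by
  rw [sum_adjPairs G fun _ j => g j, sum_adjPairs G fun i _ => g i, sum_comm]
  simp only [G.adj_comm]

end Graph

section RayleighQuotient

variable {n : ℕ} (G : SimpleGraph (Fin n)) [DecidableRel G.Adj]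

lemma two_mul_TVp (r : ℝ) (y : Fin n → ℝ) :
    2 * TVp G r y = ∑ e ∈ adjPairs G, |y e.1 - y e.2| ^ r := by
  rw [sum_adjPairs G fun i j => |y i - y j| ^ r, TVp]
  ring

lemma Np_eq_sum_adjPairs (r : ℝ) (y : Fin n → ℝ) :
    Np G r y = ∑ e ∈ adjPairs G, (|y e.1| ^ r + |y e.2| ^ r) / 2 := by
  rw [← sum_div, sum_add_distrib, sum_adjPairs_snd G fun i => |y i| ^ r,
    sum_adjPairs_fst G fun i => |y i| ^ r, Np]
  ring

lemma TVp_nonneg (r : ℝ) (y : Fin n → ℝ) : 0 ≤ TVp G r y := by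
  have h : 0 ≤ 2 * TVp G r y := two_mul_TVp G r y ▸ sum_nonneg fun e _ => by positivity
  linarith

lemma Np_nonneg (r : ℝ) (y : Fin n → ℝ) : 0 ≤ Np G r y :=
  sum_nonneg fun i _ => by positivity

lemma Fp_nonneg (r : ℝ) (y : Fin n → ℝ) : 0 ≤ Fp G r y :=
  div_nonneg (TVp_nonneg G r y) (Np_nonneg G r y)

lemma Np_Phi {p q : ℝ} (hp : 0 < p) (hq : 0 < q) (x : Fin n → ℝ) :
    Np G p (Phi (q / p) x) = Np G q x := by
  refine sum_congr rfl fun i _ => ?_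
  rw [Phi_apply, abs_signedRpow (by positivity), ← rpow_mul (abs_nonneg _),
    div_mul_cancel₀ q hp.ne']

variable {p q : ℝ} (x : Fin n → ℝ)

lemma two_mul_TVp_Phi_le (hp : 1 ≤ p) (hpq : p ≤ q) :
    2 * TVp G p (Phi (q / p) x) ≤
      (q / p) ^ p * ((2 * TVp G q x) ^ (p / q) * Np G q x ^ (1 - p / q)) := by
  rw [two_mul_TVp, two_mul_TVp, Np_eq_sum_adjPairs]
  simp only [Phi_apply]
  exact sum_abs_signedRpow_sub_rpow_le (adjPairs G) (fun e => x e.1) (fun e => x e.2) hp hpq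

lemma two_mul_TVp_Phi_lt (hp : 1 ≤ p) (hpq : p < q) (hT : 0 < TVp G q x) :
    2 * TVp G p (Phi (q / p) x) <
      (q / p) ^ p * ((2 * TVp G q x) ^ (p / q) * Np G q x ^ (1 - p / q)) := by
  have hq0 : q ≠ 0 := (by linarith : 0 < q).ne'
  have hsum : ∑ e ∈ adjPairs G, |x e.1 - x e.2| ^ q ≠ 0 := by
    rw [← two_mul_TVp]; positivity
  obtain ⟨e, he, hxe⟩ := exists_ne_zero_of_sum_ne_zero hsum
  have hne : x e.1 ≠ x e.2 := fun h => hxe (by rw [h, sub_self, abs_zero, zero_rpow hq0])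
  rw [two_mul_TVp, two_mul_TVp, Np_eq_sum_adjPairs]
  simp only [Phi_apply]
  exact sum_abs_signedRpow_sub_rpow_lt (adjPairs G) (fun e => x e.1) (fun e => x e.2) hp hpq he hne

lemma two_mul_Fp_Phi_le (hp : 1 ≤ p) (hpq : p ≤ q) :
    2 * Fp G p (Phi (q / p) x) ≤ (q / p) ^ p * (2 * Fp G q x) ^ (p / q) := by
  have hp0 : 0 < p := by linarith
  have hq0 : 0 < q := by linarith
  calc 2 * Fp G p (Phi (q / p) x) = 2 * TVp G p (Phi (q / p) x) / Np G q x := by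
        rw [Fp, Np_Phi G hp0 hq0, mul_div_assoc]
    _ ≤ (q / p) ^ p * ((2 * TVp G q x) ^ (p / q) * Np G q x ^ (1 - p / q)) / Np G q x :=
        div_le_div_of_nonneg_right (two_mul_TVp_Phi_le G x hp hpq) (Np_nonneg G q x)
    _ = (q / p) ^ p * (2 * Fp G q x) ^ (p / q) := by
        rw [mul_div_assoc, rpow_mul_rpow_one_sub_div (mul_nonneg zero_le_two (TVp_nonneg G q x))
          (Np_nonneg G q x) (by positivity), Fp, mul_div_assoc]

lemma two_mul_Fp_Phi_lt (hp : 1 ≤ p) (hpq : p < q) (hF : 0 < Fp G q x) :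
    2 * Fp G p (Phi (q / p) x) < (q / p) ^ p * (2 * Fp G q x) ^ (p / q) := by
  have hp0 : 0 < p := by linarith
  have hq0 : 0 < q := by linarith
  have hN : 0 < Np G q x := (Np_nonneg G q x).lt_of_ne fun h => by simp [Fp, ← h] at hF
  have hT : 0 < TVp G q x := by simpa [Fp, hN] using hF
  calc 2 * Fp G p (Phi (q / p) x) = 2 * TVp G p (Phi (q / p) x) / Np G q x := by
        rw [Fp, Np_Phi G hp0 hq0, mul_div_assoc]
    _ < (q / p) ^ p * ((2 * TVp G q x) ^ (p / q) * Np G q x ^ (1 - p / q)) / Np G q x :=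
        div_lt_div_of_pos_right (two_mul_TVp_Phi_lt G x hp hpq hT) hN
    _ = (q / p) ^ p * (2 * Fp G q x) ^ (p / q) := by
        rw [mul_div_assoc, rpow_mul_rpow_one_sub_div (by positivity) hN.le (by positivity), Fp,
          mul_div_assoc]

end RayleighQuotient

lemma mul_rpow_one_div_eq {p q B : ℝ} (hp : 0 < p) (hq : 0 < q) (hB : 0 ≤ B) :
    q * B ^ (1 / q) = p * ((q / p) ^ p * B ^ (p / q)) ^ (1 / p) := by
  rw [mul_rpow (by positivity) (by positivity), one_div p, rpow_rpow_inv (by positivity) hp.ne',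
    ← rpow_mul hB, show p / q * p⁻¹ = 1 / q by field_simp]
  field_simp

lemma two_rpow_sub_one_mul_eq {p q B : ℝ} (hB : 0 ≤ B) :
    2 ^ (p / q - 1) * (q / p) ^ p * B ^ (p / q) = (q / p) ^ p * (2 * B) ^ (p / q) / 2 := by
  rw [mul_rpow zero_le_two hB, rpow_sub_one two_ne_zero]
  ring

theorem stmt16_general {n : ℕ} (G : SimpleGraph (Fin n)) [DecidableRel G.Adj]
    (p q : ℝ) (hp : 1 ≤ p) (hpq : p ≤ q)
    (x : Fin n → ℝ) :
    (p * (2 * Fp G p (Phi (q / p) x)) ^ (1 / p) ≤ q * (2 * Fp G q x) ^ (1 / q) ∧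
      Fp G p (Phi (q / p) x) ≤ 2 ^ (p / q - 1) * (q / p) ^ p * Fp G q x ^ (p / q)) ∧
    (p < q → 0 < Fp G q x →
      p * (2 * Fp G p (Phi (q / p) x)) ^ (1 / p) < q * (2 * Fp G q x) ^ (1 / q) ∧
      Fp G p (Phi (q / p) x) < 2 ^ (p / q - 1) * (q / p) ^ p * Fp G q x ^ (p / q)) := by
  have hp0 : 0 < p := by linarith
  have hFp := Fp_nonneg G p (Phi (q / p) x)
  have hFq := Fp_nonneg G q x
  rw [mul_rpow_one_div_eq hp0 (by linarith) (by positivity : 0 ≤ 2 * Fp G q x),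
    two_rpow_sub_one_mul_eq hFq]
  have hle := two_mul_Fp_Phi_le G x hp hpq
  refine ⟨⟨by gcongr, by linarith⟩, fun hlt hF => ?_⟩
  have hlt' := two_mul_Fp_Phi_lt G x hp hlt hF
  exact ⟨by gcongr, by linarith⟩

/-- **`p(2F_p(Φ_{q/p}(x)))^{1/p} ≤ q(2F_q(x))^{1/q}`, equivalently
`F_p(Φ_{q/p}(x)) ≤ 2^{p/q-1}(q/p)^p F_q(x)^{p/q}`; strict if `p < q` and `F_q(x) > 0`.** -/
theorem stmt16 {n : ℕ} (G : SimpleGraph (Fin n)) [DecidableRel G.Adj]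
    (hdeg : ∀ i, 0 < G.degree i) (p q : ℝ) (hp : 1 ≤ p) (hpq : p ≤ q)
    (x : Fin n → ℝ) (hx : x ≠ 0) :
    (p * (2 * Fp G p (Phi (q / p) x)) ^ (1 / p) ≤ q * (2 * Fp G q x) ^ (1 / q) ∧
      Fp G p (Phi (q / p) x) ≤ 2 ^ (p / q - 1) * (q / p) ^ p * Fp G q x ^ (p / q)) ∧
    (p < q → 0 < Fp G q x →
      p * (2 * Fp G p (Phi (q / p) x)) ^ (1 / p) < q * (2 * Fp G q x) ^ (1 / q) ∧
      Fp G p (Phi (q / p) x) < 2 ^ (p / q - 1) * (q / p) ^ p * Fp G q x ^ (p / q)) :=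
  stmt16_general G p q hp hpq x
end
end

section
/- For every real t ≥ 1 and all a, b ∈ ℝ: | |b|^t·sign(b) − |a|^t·sign(a) | ≥ |b−a| · ((|a|^t + |b|^t)/2)^{1−1/t}. -/
open scoped BigOperators Pointwise NNReal Classical

noncomputable section

lemma lem1 (t : ℝ) (ht : 1 ≤ t) (a b : ℝ) (ha : 0 ≤ a) (hab : a ≤ b) :
    (b - a) * ((a ^ t + b ^ t) / 2) ^ (1 - 1 / t) ≤ b ^ t - a ^ t := by
  have ht0 : 0 < t := lt_of_lt_of_le one_pos ht
  have hb : 0 ≤ b := le_trans ha hab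
  have hexp : (0:ℝ) ≤ 1 - 1 / t := by
    have : 1 / t ≤ 1 := by rw [div_le_one ht0]; exact ht
    linarith
  have hatbt : a ^ t ≤ b ^ t := Real.rpow_le_rpow ha hab ht0.le
  have hMb : (a ^ t + b ^ t) / 2 ≤ b ^ t := by linarith
  have hMnn : 0 ≤ (a ^ t + b ^ t) / 2 := by
    have := Real.rpow_nonneg ha t
    have := Real.rpow_nonneg hb t
    linarith
  have h1 : ((a ^ t + b ^ t) / 2) ^ (1 - 1 / t) ≤ (b ^ t) ^ (1 - 1 / t) :=
    Real.rpow_le_rpow hMnn hMb hexp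
  have h2 : (b ^ t) ^ (1 - 1 / t) = b ^ (t - 1) := by
    rw [← Real.rpow_mul hb]
    congr 1
    field_simp
  have hba : 0 ≤ b - a := by linarith
  calc (b - a) * ((a ^ t + b ^ t) / 2) ^ (1 - 1 / t)
      ≤ (b - a) * b ^ (t - 1) := by
        rw [← h2]; exact mul_le_mul_of_nonneg_left h1 hba
    _ = b * b ^ (t - 1) - a * b ^ (t - 1) := by ring
    _ ≤ b ^ t - a ^ t := by
        have hne : (1:ℝ) + (t - 1) ≠ 0 := by intro h; exact ht0.ne' (by linarith)
        have hbt : b ^ t = b * b ^ (t - 1) := by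
          nth_rewrite 1 [show t = 1 + (t - 1) from by ring]
          rw [Real.rpow_add' hb hne, Real.rpow_one]
        have hat : a ^ t = a * a ^ (t - 1) := by
          nth_rewrite 1 [show t = 1 + (t - 1) from by ring]
          rw [Real.rpow_add' ha hne, Real.rpow_one]
        have : a * a ^ (t - 1) ≤ a * b ^ (t - 1) :=
          mul_le_mul_of_nonneg_left (Real.rpow_le_rpow ha hab (by linarith)) ha
        rw [hbt, hat]; linarith

lemma lem2 (t : ℝ) (ht : 1 ≤ t) (u b : ℝ) (hu : 0 ≤ u) (hb : 0 ≤ b) :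
    (b + u) * ((u ^ t + b ^ t) / 2) ^ (1 - 1 / t) ≤ u ^ t + b ^ t := by
  have ht0 : 0 < t := lt_of_lt_of_le one_pos ht
  have hut : 0 ≤ u ^ t := Real.rpow_nonneg hu t
  have hbt : 0 ≤ b ^ t := Real.rpow_nonneg hb t
  set M : ℝ := (u ^ t + b ^ t) / 2 with hM
  have hMnn : 0 ≤ M := by positivity
  rcases eq_or_lt_of_le hMnn with hM0 | hM0
  · -- M = 0, hence u = b = 0
    have hsum : u ^ t + b ^ t = 0 := by rw [hM] at hM0; linarith
    have hu0 : u = 0 := by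
      have : u ^ t = 0 := by linarith
      exact (Real.rpow_eq_zero hu ht0.ne').1 this
    have hb0 : b = 0 := by
      have : b ^ t = 0 := by linarith
      exact (Real.rpow_eq_zero hb ht0.ne').1 this
    simp [hu0, hb0, Real.zero_rpow ht0.ne']
  · have hconv : ((b + u) / 2) ^ t ≤ M := by
      have := (convexOn_rpow ht).2 (Set.mem_Ici.2 hb) (Set.mem_Ici.2 hu)
        (by norm_num : (0:ℝ) ≤ 1/2) (by norm_num : (0:ℝ) ≤ 1/2) (by norm_num)
      simp only [smul_eq_mul] at this
      calc ((b + u) / 2) ^ t = (1/2 * b + 1/2 * u) ^ t := by ring_nf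
        _ ≤ 1/2 * b ^ t + 1/2 * u ^ t := this
        _ = M := by rw [hM]; ring
    have hroot : (b + u) / 2 ≤ M ^ (1 / t) := by
      have h := Real.rpow_le_rpow (by positivity) hconv (by positivity : (0:ℝ) ≤ 1/t)
      rwa [← Real.rpow_mul (by positivity), mul_one_div, div_self ht0.ne',
        Real.rpow_one] at h
    have hMt : 0 < M ^ (1 / t) := Real.rpow_pos_of_pos hM0 _
    have key : M ^ (1 - 1 / t) = M / M ^ (1 / t) := by
      rw [eq_div_iff hMt.ne', ← Real.rpow_add hM0]
      norm_num
    rw [key, ← mul_div_assoc, div_le_iff₀ hMt]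
    calc (b + u) * M ≤ 2 * M ^ (1/t) * M := by
          apply mul_le_mul_of_nonneg_right _ hMnn
          linarith
      _ = (u ^ t + b ^ t) * M ^ (1/t) := by rw [hM]; ring

lemma fval_nonneg (t : ℝ) (ht : 1 ≤ t) (x : ℝ) (hx : 0 ≤ x) :
    |x| ^ t * Real.sign x = x ^ t := by
  rcases eq_or_lt_of_le hx with h | h
  · simp [← h, Real.sign_zero, Real.zero_rpow (by positivity : t ≠ 0)]
  · rw [Real.sign_of_pos h, abs_of_pos h, mul_one]

lemma fval_nonpos (t : ℝ) (ht : 1 ≤ t) (x : ℝ) (hx : x ≤ 0) :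
    |x| ^ t * Real.sign x = -((-x) ^ t) := by
  rcases eq_or_lt_of_le hx with h | h
  · simp [h, Real.sign_zero, Real.zero_rpow (by positivity : t ≠ 0)]
  · rw [Real.sign_of_neg h, abs_of_neg h, mul_neg_one]

lemma main_aux (t : ℝ) (ht : 1 ≤ t) (a b : ℝ) (hab : a ≤ b) :
    |b - a| * ((|a| ^ t + |b| ^ t) / 2) ^ (1 - 1 / t) ≤
      |(|b| ^ t * Real.sign b - |a| ^ t * Real.sign a)| := by
  have hba : (0:ℝ) ≤ b - a := by linarith
  rw [abs_of_nonneg hba]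
  rcases le_or_gt 0 a with ha | ha
  · -- 0 ≤ a ≤ b
    have hb : 0 ≤ b := le_trans ha hab
    rw [fval_nonneg t ht a ha, fval_nonneg t ht b hb,
      abs_of_nonneg ha, abs_of_nonneg hb,
      abs_of_nonneg (by linarith [Real.rpow_le_rpow ha hab (by linarith : (0:ℝ) ≤ t)] :
        (0:ℝ) ≤ b ^ t - a ^ t)]
    exact lem1 t ht a b ha hab
  rcases le_or_gt 0 b with hb | hb
  · -- a < 0 ≤ b
    rw [fval_nonneg t ht b hb, fval_nonpos t ht a ha.le, abs_of_nonneg hb, abs_of_neg ha]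
    have h2 := lem2 t ht (-a) b (by linarith) hb
    rw [sub_neg_eq_add,
      abs_of_nonneg (add_nonneg (Real.rpow_nonneg hb t)
        (Real.rpow_nonneg (by linarith) t) : (0:ℝ) ≤ b ^ t + (-a) ^ t)]
    calc (b - a) * (((-a) ^ t + b ^ t) / 2) ^ (1 - 1 / t)
        = (b + -a) * (((-a) ^ t + b ^ t) / 2) ^ (1 - 1 / t) := by ring_nf
      _ ≤ (-a) ^ t + b ^ t := h2
      _ = b ^ t + (-a) ^ t := by ring
  · -- a ≤ b < 0
    have h1 := lem1 t ht (-b) (-a) (by linarith) (by linarith)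
    rw [fval_nonpos t ht a (by linarith), fval_nonpos t ht b hb.le,
      abs_of_neg (by linarith : a < 0), abs_of_neg hb]
    have hnn : (0:ℝ) ≤ (-a) ^ t - (-b) ^ t := by
      have := Real.rpow_le_rpow (by linarith : (0:ℝ) ≤ -b) (by linarith : -b ≤ -a)
        (by linarith : (0:ℝ) ≤ t)
      linarith
    calc (b - a) * (((-a) ^ t + (-b) ^ t) / 2) ^ (1 - 1 / t)
        = (-a - -b) * (((-b) ^ t + (-a) ^ t) / 2) ^ (1 - 1 / t) := by ring_nf
      _ ≤ (-a) ^ t - (-b) ^ t := h1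
      _ = |(-((-b) ^ t) - -((-a) ^ t))| := by
          rw [abs_of_nonneg (by linarith)]; ring

/-- **The elementary inequality
`||b|^t sign(b) − |a|^t sign(a)| ≥ |b−a|·((|a|^t+|b|^t)/2)^{1−1/t}` for `t ≥ 1`.** -/
theorem stmt17 (t : ℝ) (ht : 1 ≤ t) (a b : ℝ) :
    |b - a| * ((|a| ^ t + |b| ^ t) / 2) ^ (1 - 1 / t) ≤
      |(|b| ^ t * Real.sign b - |a| ^ t * Real.sign a)| := by
  rcases le_total a b with h | h
  · exact main_aux t ht a b h
  · calc |b - a| * ((|a| ^ t + |b| ^ t) / 2) ^ (1 - 1 / t)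
        = |a - b| * ((|b| ^ t + |a| ^ t) / 2) ^ (1 - 1 / t) := by
          rw [abs_sub_comm]; ring_nf
      _ ≤ |(|a| ^ t * Real.sign a - |b| ^ t * Real.sign b)| := main_aux t ht b a h
      _ = |(|b| ^ t * Real.sign b - |a| ^ t * Real.sign a)| := abs_sub_comm _ _
end
end

section
/- Let G be a connected finite simple graph on V={1,…,n} and let S = {u,v} where {u,v} ∈ E. Then the characteristic vector 1_S of S is an eigenvector of the graph 1-Laplacian Δ_1 (i.e., (λ, 1_S) is an eigenpair of Δ_1 for some λ ∈ ℝ) if and only if the subgraph of G induced on V∖S has no isolated vertex, i.e., every vertex of V∖{u,v} has a neighbor in V∖{u,v}. Moreover, in that case (1 − 2/(deg(u)+deg(v)), 1_S) is an eigenpair of Δ_1. -/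
open scoped BigOperators Pointwise NNReal Classical

noncomputable section

section Stmt18Aux

lemma sgn_one' : Sgn 1 = {1} := by norm_num [Sgn]
lemma sgn_zero' : Sgn 0 = Set.Icc (-1) 1 := by norm_num [Sgn]
lemma sgn_negone' : Sgn (-1) = {-1} := by norm_num [Sgn]

lemma mem_scaled_Icc {c y : ℝ} (hc : 0 ≤ c) (h1 : -c ≤ y) (h2 : y ≤ c) :
    ∃ s ∈ Set.Icc (-1:ℝ) 1, c * s = y := by
  rcases hc.eq_or_lt with h | h
  · exact ⟨0, by norm_num, by nlinarith⟩
  · refine ⟨y / c, ⟨?_, ?_⟩, by rw [mul_comm, div_mul_cancel₀ y h.ne']⟩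
    · rw [le_div_iff₀ h]; linarith
    · rw [div_le_one h]; exact h2

/-- number of neighbors of `w` inside `{u,v}` -/
def aCnt {n : ℕ} (G : SimpleGraph (Fin n)) [DecidableRel G.Adj] (u v w : Fin n) : ℕ :=
  (G.neighborFinset w ∩ {u, v}).card

/-- number of neighbors of `w` outside `{u,v}` -/
def eCnt {n : ℕ} (G : SimpleGraph (Fin n)) [DecidableRel G.Adj] (u v w : Fin n) : ℕ :=
  (G.neighborFinset w \ {u, v}).card

def tauF {n : ℕ} (G : SimpleGraph (Fin n)) [DecidableRel G.Adj] (u v w : Fin n) : ℝ :=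
  max 0 (2 / ((G.degree u : ℝ) + (G.degree v : ℝ)) * (G.degree w : ℝ) - (eCnt G u v w : ℝ))

variable {n : ℕ} {G : SimpleGraph (Fin n)} [DecidableRel G.Adj] {u v : Fin n}

lemma ae_eq_deg (w : Fin n) : aCnt G u v w + eCnt G u v w = G.degree w :=
  Finset.card_inter_add_card_sdiff _ _

lemma aCnt_eq (hne : u ≠ v) (w : Fin n) :
    aCnt G u v w = (if G.Adj w u then 1 else 0) + (if G.Adj w v then 1 else 0) := by
  unfold aCnt
  have h : G.neighborFinset w ∩ {u, v} =
      ({u, v} : Finset (Fin n)).filter (fun x => x ∈ G.neighborFinset w) := by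
    ext x; simp [Finset.mem_filter, and_comm]
  rw [h, Finset.card_filter, Finset.sum_pair hne]
  simp [SimpleGraph.mem_neighborFinset]

lemma count_le (huv : G.Adj u v) (T : Finset (Fin n)) (hu : u ∉ T) (hv : v ∉ T) :
    (∑ t ∈ T, aCnt G u v t) + 2 ≤ G.degree u + G.degree v := by
  have hne := huv.ne
  rw [Finset.sum_congr rfl (fun t _ => aCnt_eq hne t), Finset.sum_add_distrib]
  have key : ∀ y z : Fin n, y ∉ T → z ∉ T → G.Adj y z →
      (∑ t ∈ T, if G.Adj t y then 1 else 0) + 1 ≤ G.degree y := by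
    intro y z hyT hzT hadj
    rw [← Finset.card_filter]
    have hsub : (T.filter fun t => G.Adj t y) ∪ {z} ⊆ G.neighborFinset y := by
      intro x hx
      rcases Finset.mem_union.1 hx with hx | hx
      · exact (G.mem_neighborFinset y x).2 (Finset.mem_filter.1 hx).2.symm
      · rw [Finset.mem_singleton] at hx; rw [hx]
        exact (G.mem_neighborFinset y z).2 hadj
    have hdisj : Disjoint (T.filter fun t => G.Adj t y) {z} := by
      rw [Finset.disjoint_singleton_right]
      intro hz
      exact hzT (Finset.mem_filter.1 hz).1
    calc (T.filter fun t => G.Adj t y).card + 1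
        = ((T.filter fun t => G.Adj t y) ∪ {z}).card := by
          rw [Finset.card_union_of_disjoint hdisj, Finset.card_singleton]
      _ ≤ (G.neighborFinset y).card := Finset.card_le_card hsub
      _ = G.degree y := rfl
  have h1 := key u v hu hv huv
  have h2 := key v u hv hu huv.symm
  omega

lemma tau_nonneg (w : Fin n) : 0 ≤ tauF G u v w := le_max_left _ _

lemma deg_eq_real (w : Fin n) :
    (G.degree w : ℝ) = (aCnt G u v w : ℝ) + (eCnt G u v w : ℝ) := by
  rw [← ae_eq_deg (G := G) (u := u) (v := v) w]; push_cast; ring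

lemma a_le (huv : G.Adj u v) {w : Fin n} (hw1 : w ≠ u) (hw2 : w ≠ v) :
    (aCnt G u v w : ℝ) + 2 ≤ (G.degree u : ℝ) + (G.degree v : ℝ) := by
  have h := count_le huv {w} (by simp [Ne.symm hw1]) (by simp [Ne.symm hw2])
  rw [Finset.sum_singleton] at h
  exact_mod_cast h

lemma D_ge_two (huv : G.Adj u v) : (2:ℝ) ≤ (G.degree u : ℝ) + (G.degree v : ℝ) := by
  have h := count_le (G := G) huv ∅ (by simp) (by simp)
  rw [Finset.sum_empty] at h
  exact_mod_cast h

lemma tau_le_one (huv : G.Adj u v) {w : Fin n} (hw1 : w ≠ u) (hw2 : w ≠ v)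
    (he : 1 ≤ eCnt G u v w) : tauF G u v w ≤ 1 := by
  have hD2 := D_ge_two (G := G) huv
  have hD0 : (0:ℝ) < (G.degree u : ℝ) + (G.degree v : ℝ) := by linarith
  have ha := a_le huv hw1 hw2
  have hd := deg_eq_real (G := G) (u := u) (v := v) w
  have he' : (1:ℝ) ≤ (eCnt G u v w : ℝ) := by exact_mod_cast he
  apply max_le (by norm_num)
  rw [sub_le_iff_le_add, div_mul_eq_mul_div, div_le_iff₀ hD0]
  nlinarith [mul_nonneg (by linarith : (0:ℝ) ≤ (eCnt G u v w : ℝ) - 1)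
    (by linarith : (0:ℝ) ≤ (G.degree u : ℝ) + (G.degree v : ℝ) - 2)]

lemma tau_pos (huv : G.Adj u v) {w : Fin n} (hw1 : w ≠ u) (hw2 : w ≠ v)
    (he : 1 ≤ eCnt G u v w) (ht : 0 < tauF G u v w) :
    eCnt G u v w = 1 ∧ (1:ℝ) ≤ (aCnt G u v w : ℝ) ∧
      tauF G u v w = 2 / ((G.degree u : ℝ) + (G.degree v : ℝ)) * (G.degree w : ℝ) - 1 ∧
      ((G.degree u : ℝ) + (G.degree v : ℝ)) < 2 * (G.degree w : ℝ) := by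
  have hD2 := D_ge_two (G := G) huv
  have hD0 : (0:ℝ) < (G.degree u : ℝ) + (G.degree v : ℝ) := by linarith
  have ha := a_le huv hw1 hw2
  have hd := deg_eq_real (G := G) (u := u) (v := v) w
  have he' : (1:ℝ) ≤ (eCnt G u v w : ℝ) := by exact_mod_cast he
  have hx : 0 < 2 / ((G.degree u : ℝ) + (G.degree v : ℝ)) * (G.degree w : ℝ)
      - (eCnt G u v w : ℝ) := by
    rcases lt_max_iff.1 ht with h | h
    · exact absurd h (lt_irrefl 0)
    · exact h
  have hx' : (eCnt G u v w : ℝ) * ((G.degree u : ℝ) + (G.degree v : ℝ))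
      < 2 * (G.degree w : ℝ) := by
    rw [sub_pos, div_mul_eq_mul_div, lt_div_iff₀ hD0] at hx
    exact hx
  have hA1 : (1:ℝ) ≤ (aCnt G u v w : ℝ) := by
    rcases Nat.eq_zero_or_pos (aCnt G u v w) with h0 | h0
    · exfalso
      have : (aCnt G u v w : ℝ) = 0 := by exact_mod_cast h0
      nlinarith
    · exact_mod_cast h0
  have hE1 : eCnt G u v w = 1 := by
    rcases Nat.lt_or_ge (eCnt G u v w) 2 with h2 | h2
    · omega
    · exfalso
      have h2' : (2:ℝ) ≤ (eCnt G u v w : ℝ) := by exact_mod_cast h2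
      nlinarith [mul_nonneg (by linarith : (0:ℝ) ≤ (eCnt G u v w : ℝ) - 2)
        (by linarith : (0:ℝ) ≤ (G.degree u : ℝ) + (G.degree v : ℝ) - 2)]
  have hE1' : (eCnt G u v w : ℝ) = 1 := by exact_mod_cast hE1
  refine ⟨hE1, hA1, ?_, ?_⟩
  · rw [tauF, max_eq_right (by linarith), hE1']
  · nlinarith

lemma no_mutual (huv : G.Adj u v) {w w' : Fin n} (hw1 : w ≠ u) (hw2 : w ≠ v)
    (hw1' : w' ≠ u) (hw2' : w' ≠ v) (he : 1 ≤ eCnt G u v w) (he' : 1 ≤ eCnt G u v w')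
    (hadj : G.Adj w w') (ht : 0 < tauF G u v w) : tauF G u v w' = 0 := by
  by_contra hcon
  have ht' : 0 < tauF G u v w' := (tau_nonneg w').lt_of_ne (Ne.symm hcon)
  obtain ⟨hE, hA, _, hS⟩ := tau_pos huv hw1 hw2 he ht
  obtain ⟨hE', hA', _, hS'⟩ := tau_pos huv hw1' hw2' he' ht'
  have hww' : w ≠ w' := hadj.ne
  have hcnt := count_le huv {w, w'} (by simp [Ne.symm hw1, Ne.symm hw1'])
    (by simp [Ne.symm hw2, Ne.symm hw2'])
  rw [Finset.sum_pair hww'] at hcnt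
  have hcnt' : (aCnt G u v w : ℝ) + (aCnt G u v w' : ℝ) + 2
      ≤ (G.degree u : ℝ) + (G.degree v : ℝ) := by exact_mod_cast hcnt
  have hd := deg_eq_real (G := G) (u := u) (v := v) w
  have hd' := deg_eq_real (G := G) (u := u) (v := v) w'
  have hE1 : (eCnt G u v w : ℝ) = 1 := by exact_mod_cast hE
  have hE1' : (eCnt G u v w' : ℝ) = 1 := by exact_mod_cast hE'
  linarith


lemma arith_u (D du : ℝ) : (1 - 2 / D * du) + (du - 1) = (1 - 2 / D) * du * 1 := by ring

lemma arith_v (D du dv : ℝ) (hD : D = du + dv) (hD0 : 0 < D) :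
    -(1 - 2 / D * du) + (dv - 1) = (1 - 2 / D) * dv * 1 := by
  have hne : D ≠ 0 := ne_of_gt hD0
  field_simp
  nlinarith [hD]

lemma arith_upper (D A E dI T t lam : ℝ) (hD2 : 2 ≤ D) (hlam : lam = 1 - 2 / D)
    (hA0 : 0 ≤ A) (hdI0 : 0 ≤ dI) (hT0 : 0 ≤ T) (hEt : E * t ≤ A) :
    -A + (E * t - T) ≤ lam * dI := by
  have hD0 : (0:ℝ) < D := by linarith
  have h1 : 2 / D ≤ 1 := by rw [div_le_one hD0]; linarith
  have hlam0 : 0 ≤ lam := by rw [hlam]; linarith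
  nlinarith [mul_nonneg hlam0 hdI0]

lemma arith_low_pos' (D A dI lam : ℝ) (hlam : lam = 1 - 2 / D) (hdI : dI = A + 1) :
    -(lam * dI) ≤ -A + (1 * (2 / D * dI - 1) - 0) := by
  rw [hlam, hdI]; nlinarith [sq_nonneg (1:ℝ)]

lemma arith_low_zero0 (D A E dI lam : ℝ) (hlam : lam = 1 - 2 / D) (hdeg : dI = A + E)
    (ht0 : 2 / D * dI - E ≤ 0) : -(lam * dI) ≤ -A + (E * 0 - 0) := by
  have h1 : lam * dI = dI - 2 / D * dI := by rw [hlam]; ring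
  linarith

lemma arith_low_zero1 (D A E dI Q k lam : ℝ) (hD2 : 2 ≤ D) (hlam : lam = 1 - 2 / D)
    (hdeg : dI = A + E) (hE1 : 1 ≤ E) (hk1 : 1 ≤ k) (hcnt : A + Q + 2 ≤ D) :
    -(lam * dI) ≤ -A + (E * 0 - (2 / D * (Q + k) - k)) := by
  have hD0 : (0:ℝ) < D := by linarith
  have hid : lam * dI - (A + (2 / D * (Q + k) - k))
      = ((D - 2) * (A + E) - D * A - 2 * (Q + k) + D * k) / D := by
    rw [hlam, hdeg]; field_simp; ring
  have hnum : 0 ≤ (D - 2) * (A + E) - D * A - 2 * (Q + k) + D * k := by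
    nlinarith [mul_nonneg (by linarith : (0:ℝ) ≤ D - 2) (by linarith : (0:ℝ) ≤ E + k - 2)]
  have := div_nonneg hnum hD0.le
  linarith [hid ▸ this]

lemma construction {n : ℕ} (G : SimpleGraph (Fin n)) [DecidableRel G.Adj]
    (u v : Fin n) (huv : G.Adj u v)
    (h : ∀ w, w ≠ u → w ≠ v → ∃ w', w' ≠ u ∧ w' ≠ v ∧ G.Adj w w') :
    IsEigenpair1 G (1 - 2 / ((G.degree u : ℝ) + (G.degree v : ℝ)))
      (fun i => if i = u ∨ i = v then (1 : ℝ) else 0) := by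
  classical
  have hne : u ≠ v := huv.ne
  have hD2 := D_ge_two (G := G) huv
  have hD0 : (0:ℝ) < (G.degree u : ℝ) + (G.degree v : ℝ) := by linarith
  set D : ℝ := (G.degree u : ℝ) + (G.degree v : ℝ) with hD
  set lam : ℝ := 1 - 2 / D with hlam
  have hlam0 : 0 ≤ lam := by
    rw [hlam]
    have : 2 / D ≤ 1 := by rw [div_le_one hD0]; linarith
    linarith
  have hE : ∀ w, w ≠ u → w ≠ v → 1 ≤ eCnt G u v w := by
    intro w hw1 hw2
    obtain ⟨w', h1, h2, h3⟩ := h w hw1 hw2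
    have hmem : w' ∈ G.neighborFinset w \ {u, v} := by
      simp [SimpleGraph.mem_neighborFinset, h3, h1, h2]
    exact Finset.card_pos.2 ⟨w', hmem⟩
  set c : ℝ := 1 - 2 / D * (G.degree u : ℝ) with hc
  set τ : Fin n → ℝ := tauF G u v with hτ
  set z : Fin n → Fin n → ℝ := fun i j =>
    if i = u ∨ i = v then (if j = u ∨ j = v then (if i = u then c else -c) else 1)
    else (if j = u ∨ j = v then -1 else τ i - τ j) with hzdef
  have hdu1 : (1:ℝ) ≤ (G.degree u : ℝ) := by
    have : 0 < G.degree u := (G.degree_pos_iff_exists_adj u).2 ⟨v, huv⟩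
    exact_mod_cast this
  have hdv1 : (1:ℝ) ≤ (G.degree v : ℝ) := by
    have : 0 < G.degree v := (G.degree_pos_iff_exists_adj v).2 ⟨u, huv.symm⟩
    exact_mod_cast this
  have hcIcc : c ∈ Set.Icc (-1:ℝ) 1 := by
    have h2 : 2 / D * (G.degree u : ℝ) ≤ 2 := by
      rw [div_mul_eq_mul_div, div_le_iff₀ hD0]
      nlinarith
    have h0 : 0 ≤ 2 / D * (G.degree u : ℝ) := by positivity
    constructor
    · rw [hc]; linarith
    · rw [hc]; linarith
  -- values of x
  have hx1 : ∀ j : Fin n, (j = u ∨ j = v) →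
      (fun i => if i = u ∨ i = v then (1:ℝ) else 0) j = 1 := by
    intro j hj; simp [hj]
  have hx0 : ∀ j : Fin n, j ≠ u → j ≠ v →
      (fun i => if i = u ∨ i = v then (1:ℝ) else 0) j = 0 := by
    intro j h1 h2; simp [h1, h2]
  -- values of z
  have hz_in_out : ∀ i j : Fin n, (i = u ∨ i = v) → j ≠ u → j ≠ v → z i j = 1 := by
    intro i j hi h1 h2
    simp only [hzdef, if_pos hi, if_neg (show ¬(j = u ∨ j = v) by tauto)]
  have hz_out_in : ∀ i j : Fin n, i ≠ u → i ≠ v → (j = u ∨ j = v) → z i j = -1 := by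
    intro i j h1 h2 hj
    simp only [hzdef, if_neg (show ¬(i = u ∨ i = v) by tauto), if_pos hj]
  have hz_out_out : ∀ i j : Fin n, i ≠ u → i ≠ v → j ≠ u → j ≠ v → z i j = τ i - τ j := by
    intro i j h1 h2 h3 h4
    simp only [hzdef, if_neg (show ¬(i = u ∨ i = v) by tauto),
      if_neg (show ¬(j = u ∨ j = v) by tauto)]
  have hz_uv : z u v = c := by
    simp [hzdef]
  have hz_vu : z v u = -c := by
    simp [hzdef, Ne.symm hne]
  refine ⟨?_, z, ?_, ?_, ?_⟩
  · -- x ≠ 0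
    intro h0
    have h1 : (fun i => if i = u ∨ i = v then (1:ℝ) else 0) u = 0 := by rw [h0]; rfl
    rw [hx1 u (Or.inl rfl)] at h1
    norm_num at h1
  · -- Sgn membership of z
    intro i j hij
    by_cases hi : i = u ∨ i = v <;> by_cases hj : j = u ∨ j = v
    · rw [hx1 i hi, hx1 j hj, sub_self, sgn_zero']
      rcases hi with rfl | rfl
      · have hju : j ≠ i := fun hh => G.irrefl (hh ▸ hij)
        rcases hj with rfl | rfl
        · exact absurd rfl hju.symm
        · rw [hz_uv]; exact hcIcc
      · rcases hj with rfl | rfl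
        · rw [hz_vu]
          constructor
          · linarith [hcIcc.2]
          · linarith [hcIcc.1]
        · exact absurd rfl hij.ne
    · push_neg at hj
      rw [hx1 i hi, hx0 j hj.1 hj.2, hz_in_out i j hi hj.1 hj.2]
      norm_num [Sgn]
    · push_neg at hi
      rw [hx0 i hi.1 hi.2, hx1 j hj, hz_out_in i j hi.1 hi.2 hj]
      norm_num [Sgn]
    · push_neg at hi; push_neg at hj
      rw [hx0 i hi.1 hi.2, hx0 j hj.1 hj.2, sub_self, sgn_zero',
        hz_out_out i j hi.1 hi.2 hj.1 hj.2]
      have t1 := tau_nonneg (G := G) (u := u) (v := v) i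
      have t2 := tau_nonneg (G := G) (u := u) (v := v) j
      have t3 := tau_le_one huv hi.1 hi.2 (hE i hi.1 hi.2)
      have t4 := tau_le_one huv hj.1 hj.2 (hE j hj.1 hj.2)
      constructor
      · simp only [hτ]; linarith
      · simp only [hτ]; linarith
  · -- antisymmetry
    intro i j hij
    have hijne : i ≠ j := hij.ne
    by_cases hi : i = u ∨ i = v <;> by_cases hj : j = u ∨ j = v
    · rcases hi with rfl | rfl
      · rcases hj with rfl | rfl
        · exact absurd rfl hijne
        · rw [hz_uv, hz_vu, neg_neg]
      · rcases hj with rfl | rfl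
        · rw [hz_uv, hz_vu]
        · exact absurd rfl hijne
    · push_neg at hj
      rw [hz_in_out i j hi hj.1 hj.2, hz_out_in j i hj.1 hj.2 hi]
      norm_num
    · push_neg at hi
      rw [hz_out_in i j hi.1 hi.2 hj, hz_in_out j i hj hi.1 hi.2]
    · push_neg at hi; push_neg at hj
      rw [hz_out_out i j hi.1 hi.2 hj.1 hj.2, hz_out_out j i hj.1 hj.2 hi.1 hi.2]
      ring
  · -- the vertex equations
    intro i
    have hconv : (∑ j : Fin n, if G.Adj i j then z i j else 0)
        = ∑ j ∈ G.neighborFinset i, z i j := by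
      rw [SimpleGraph.neighborFinset_eq_filter, Finset.sum_filter]
    by_cases hiu : i = u
    · subst hiu
      rw [hx1 i (Or.inl rfl), sgn_one', Set.image_singleton, Set.mem_singleton_iff, hconv]
      have hvmem : v ∈ G.neighborFinset i := (G.mem_neighborFinset i v).2 huv
      rw [← Finset.add_sum_erase _ _ hvmem, hz_uv]
      have hrest : ∀ j ∈ (G.neighborFinset i).erase v, z i j = 1 := by
        intro j hj
        have hjv : j ≠ v := Finset.ne_of_mem_erase hj
        have hju : j ≠ i := ((G.mem_neighborFinset i j).1 (Finset.mem_of_mem_erase hj)).ne'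
        exact hz_in_out i j (Or.inl rfl) hju hjv
      rw [Finset.sum_congr rfl hrest, Finset.sum_const, Finset.card_erase_of_mem hvmem,
        SimpleGraph.card_neighborFinset_eq_degree, nsmul_eq_mul, mul_one]
      have hdu : 1 ≤ G.degree i := (G.degree_pos_iff_exists_adj i).2 ⟨v, huv⟩
      have hcast : ((G.degree i - 1 : ℕ) : ℝ) = (G.degree i : ℝ) - 1 := by
        push_cast [hdu]; ring
      rw [hcast, hc, hlam]
      exact arith_u D (G.degree i : ℝ)
    by_cases hiv : i = v
    · subst hiv
      rw [hx1 i (Or.inr rfl), sgn_one', Set.image_singleton, Set.mem_singleton_iff, hconv]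
      have humem : u ∈ G.neighborFinset i := (G.mem_neighborFinset i u).2 huv.symm
      rw [← Finset.add_sum_erase _ _ humem, hz_vu]
      have hrest : ∀ j ∈ (G.neighborFinset i).erase u, z i j = 1 := by
        intro j hj
        have hju : j ≠ u := Finset.ne_of_mem_erase hj
        have hjv : j ≠ i := ((G.mem_neighborFinset i j).1 (Finset.mem_of_mem_erase hj)).ne'
        exact hz_in_out i j (Or.inr rfl) hju hjv
      rw [Finset.sum_congr rfl hrest, Finset.sum_const, Finset.card_erase_of_mem humem,
        SimpleGraph.card_neighborFinset_eq_degree, nsmul_eq_mul, mul_one]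
      have hdv : 1 ≤ G.degree i := (G.degree_pos_iff_exists_adj i).2 ⟨u, huv.symm⟩
      have hcast : ((G.degree i - 1 : ℕ) : ℝ) = (G.degree i : ℝ) - 1 := by
        push_cast [hdv]; ring
      rw [hcast, hc, hlam]
      exact arith_v D (G.degree u : ℝ) (G.degree i : ℝ) hD hD0
    -- outside vertex
    · have hin : ∀ j ∈ G.neighborFinset i ∩ {u, v}, z i j = -1 := by
        intro j hj
        have hj2 : j = u ∨ j = v := by
          have := (Finset.mem_inter.1 hj).2
          simpa using this
        exact hz_out_in i j hiu hiv hj2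
      have hout : ∀ j ∈ G.neighborFinset i \ {u, v}, z i j = τ i - τ j := by
        intro j hj
        obtain ⟨hj1, hj2⟩ := Finset.mem_sdiff.1 hj
        have hj3 : ¬(j = u ∨ j = v) := by simpa using hj2
        push_neg at hj3
        exact hz_out_out i j hiu hiv hj3.1 hj3.2
      have hsum : ∑ j ∈ G.neighborFinset i, z i j
          = -(aCnt G u v i : ℝ) + ((eCnt G u v i : ℝ) * τ i
            - ∑ j ∈ G.neighborFinset i \ {u, v}, τ j) := by
        rw [← Finset.sum_inter_add_sum_sdiff (G.neighborFinset i) {u, v} (z i),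
          Finset.sum_congr rfl hin, Finset.sum_congr rfl hout, Finset.sum_sub_distrib,
          Finset.sum_const, Finset.sum_const]
        simp only [aCnt, eCnt, nsmul_eq_mul, mul_neg_one, mul_one]
      rw [hx0 i hiu hiv, sgn_zero', hconv, hsum]
      -- basic facts
      have hadjout : ∀ j ∈ G.neighborFinset i \ {u, v}, j ≠ u ∧ j ≠ v ∧ G.Adj i j := by
        intro j hj
        obtain ⟨hj1, hj2⟩ := Finset.mem_sdiff.1 hj
        have hj3 : ¬(j = u ∨ j = v) := by simpa using hj2
        push_neg at hj3
        exact ⟨hj3.1, hj3.2, (G.mem_neighborFinset i j).1 hj1⟩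
      have hdeg : (G.degree i : ℝ) = (aCnt G u v i : ℝ) + (eCnt G u v i : ℝ) :=
        deg_eq_real i
      have hE1 : (1:ℝ) ≤ (eCnt G u v i : ℝ) := by exact_mod_cast hE i hiu hiv
      have hA0 : (0:ℝ) ≤ (aCnt G u v i : ℝ) := Nat.cast_nonneg _
      have hc0 : 0 ≤ lam * (G.degree i : ℝ) := mul_nonneg hlam0 (Nat.cast_nonneg _)
      have hT0 : 0 ≤ ∑ j ∈ G.neighborFinset i \ {u, v}, τ j :=
        Finset.sum_nonneg fun j _ => tau_nonneg j
      -- upper bound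
      have hup : -(aCnt G u v i : ℝ) + ((eCnt G u v i : ℝ) * τ i
            - ∑ j ∈ G.neighborFinset i \ {u, v}, τ j) ≤ lam * (G.degree i : ℝ) := by
        have hEt : (eCnt G u v i : ℝ) * τ i ≤ (aCnt G u v i : ℝ) := by
          rcases (tau_nonneg (G := G) (u := u) (v := v) i).eq_or_lt with h0 | h0
          · have : τ i = 0 := by rw [hτ]; exact h0.symm
            rw [this, mul_zero]; exact hA0
          · obtain ⟨hE1', hA1, _, _⟩ := tau_pos huv hiu hiv (hE i hiu hiv) h0
            have hEone : (eCnt G u v i : ℝ) = 1 := by exact_mod_cast hE1'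
            have ht1 : τ i ≤ 1 := tau_le_one huv hiu hiv (hE i hiu hiv)
            rw [hEone, one_mul]
            linarith
        exact arith_upper D _ _ _ _ _ lam hD2 hlam hA0 (Nat.cast_nonneg _) hT0 hEt
      -- lower bound
      have hlow : -(lam * (G.degree i : ℝ)) ≤ -(aCnt G u v i : ℝ) + ((eCnt G u v i : ℝ) * τ i
            - ∑ j ∈ G.neighborFinset i \ {u, v}, τ j) := by
        rcases (tau_nonneg (G := G) (u := u) (v := v) i).eq_or_lt with h0 | h0
        · -- τ i = 0
          have hτi : τ i = 0 := by rw [hτ]; exact h0.symm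
          have ht0 : 2 / D * (G.degree i : ℝ) - (eCnt G u v i : ℝ) ≤ 0 := by
            by_contra hcon
            push_neg at hcon
            have hpos : 0 < tauF G u v i := lt_max_iff.2 (Or.inr hcon)
            rw [← hτ] at hpos
            linarith
          set P := (G.neighborFinset i \ {u, v}).filter (fun j => 0 < τ j) with hP
          have hTP : ∑ j ∈ G.neighborFinset i \ {u, v}, τ j = ∑ j ∈ P, τ j := by
            rw [hP]
            exact (Finset.sum_filter_of_ne fun j _ hne0 =>
              (tau_nonneg (G := G) (u := u) (v := v) j).lt_of_ne (Ne.symm hne0)).symm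
          have hPfacts : ∀ j ∈ P, j ≠ u ∧ j ≠ v ∧ G.Adj i j ∧
              τ j = 2 / D * ((aCnt G u v j : ℝ) + 1) - 1 := by
            intro j hj
            obtain ⟨hj1, hj2⟩ := Finset.mem_filter.1 hj
            obtain ⟨hju, hjv, hadj⟩ := hadjout j hj1
            have hjτ : 0 < tauF G u v j := by rw [← hτ]; exact hj2
            obtain ⟨hEj, _, hτval, _⟩ := tau_pos huv hju hjv (hE j hju hjv) hjτ
            have hdegj : (G.degree j : ℝ) = (aCnt G u v j : ℝ) + 1 := by
              rw [deg_eq_real (G := G) (u := u) (v := v) j, hEj]; norm_num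
            refine ⟨hju, hjv, hadj, ?_⟩
            rw [hτ, hτval, hdegj]
          rcases Finset.eq_empty_or_nonempty P with hPe | hPne
          · have hT2 : ∑ j ∈ G.neighborFinset i \ {u, v}, τ j = 0 := by
              rw [hTP, hPe, Finset.sum_empty]
            rw [hτi, hT2]
            exact arith_low_zero0 D _ _ _ lam hlam hdeg ht0
          · have hk1 : (1:ℝ) ≤ (P.card : ℝ) := by
              have : 0 < P.card := Finset.card_pos.2 hPne
              exact_mod_cast this
            have hTval : ∑ j ∈ G.neighborFinset i \ {u, v}, τ j
                = 2 / D * ((∑ j ∈ P, (aCnt G u v j : ℝ)) + (P.card : ℝ)) - (P.card : ℝ) := by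
              rw [hTP, Finset.sum_congr rfl (fun j hj => (hPfacts j hj).2.2.2)]
              rw [Finset.sum_sub_distrib, Finset.sum_const, ← Finset.mul_sum,
                Finset.sum_add_distrib, Finset.sum_const]
              push_cast
              ring
            have hiP : i ∉ P := by
              intro hiP
              exact G.irrefl (hPfacts i hiP).2.2.1
            have hcnt : (aCnt G u v i : ℝ) + (∑ j ∈ P, (aCnt G u v j : ℝ)) + 2 ≤ D := by
              have huP : u ∉ insert i P := by
                simp only [Finset.mem_insert]
                push_neg
                exact ⟨Ne.symm hiu, fun hu => (hPfacts u hu).1 rfl⟩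
              have hvP : v ∉ insert i P := by
                simp only [Finset.mem_insert]
                push_neg
                exact ⟨Ne.symm hiv, fun hv => (hPfacts v hv).2.1 rfl⟩
              have := count_le huv (insert i P) huP hvP
              rw [Finset.sum_insert hiP] at this
              have hcast : ((aCnt G u v i + ∑ j ∈ P, aCnt G u v j : ℕ) : ℝ) + 2
                  ≤ ((G.degree u + G.degree v : ℕ) : ℝ) := by exact_mod_cast this
              push_cast at hcast
              rw [hD]
              linarith
            rw [hτi, hTval]
            exact arith_low_zero1 D _ _ _ _ _ lam hD2 hlam hdeg hE1 hk1 hcnt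
        · -- τ i > 0
          obtain ⟨hEi, hA1, hτval, _⟩ := tau_pos huv hiu hiv (hE i hiu hiv) h0
          have hEone : (eCnt G u v i : ℝ) = 1 := by exact_mod_cast hEi
          have hT2 : ∑ j ∈ G.neighborFinset i \ {u, v}, τ j = 0 := by
            apply Finset.sum_eq_zero
            intro j hj
            obtain ⟨hju, hjv, hadj⟩ := hadjout j hj
            have := no_mutual huv hiu hiv hju hjv (hE i hiu hiv) (hE j hju hjv) hadj
              (by rw [← hτ] at h0 ⊢; exact h0)
            rw [hτ]
            exact this
          have hτi : τ i = 2 / D * (G.degree i : ℝ) - 1 := by rw [hτ]; exact hτval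
          have hdeg1 : (G.degree i : ℝ) = (aCnt G u v i : ℝ) + 1 := by
            rw [hdeg, hEone]
          rw [hτi, hT2, hEone]
          exact arith_low_pos' D _ _ lam hlam hdeg1
      exact (Set.mem_image _ _ _).2 (mem_scaled_Icc hc0 hlow hup)

lemma converse {n : ℕ} (G : SimpleGraph (Fin n)) [DecidableRel G.Adj] (hconn : G.Connected)
    (u v : Fin n) (huv : G.Adj u v) (lam : ℝ)
    (heig : IsEigenpair1 G lam (fun i => if i = u ∨ i = v then (1 : ℝ) else 0)) :
    ∀ w, w ≠ u → w ≠ v → ∃ w', w' ≠ u ∧ w' ≠ v ∧ G.Adj w w' := by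
  classical
  obtain ⟨-, z, hz1, hz2, hz3⟩ := heig
  have hne : u ≠ v := huv.ne
  have hx1 : ∀ j : Fin n, (j = u ∨ j = v) →
      (fun i => if i = u ∨ i = v then (1:ℝ) else 0) j = 1 := by
    intro j hj; simp [hj]
  have hx0 : ∀ j : Fin n, j ≠ u → j ≠ v →
      (fun i => if i = u ∨ i = v then (1:ℝ) else 0) j = 0 := by
    intro j h1 h2; simp [h1, h2]
  have hconv : ∀ i0 : Fin n, (∑ j : Fin n, if G.Adj i0 j then z i0 j else 0)
      = ∑ j ∈ G.neighborFinset i0, z i0 j := by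
    intro i0
    rw [SimpleGraph.neighborFinset_eq_filter, Finset.sum_filter]
  have hdu : 0 < G.degree u := (G.degree_pos_iff_exists_adj u).2 ⟨v, huv⟩
  have hdv : 0 < G.degree v := (G.degree_pos_iff_exists_adj v).2 ⟨u, huv.symm⟩
  -- compute the sums at u and v
  have hSvert : ∀ y y' : Fin n, (y = u ∨ y = v) → (y' = u ∨ y' = v) → y ≠ y' → G.Adj y y' →
      ∑ j ∈ G.neighborFinset y, z y j = z y y' + ((G.degree y : ℝ) - 1) := by
    intro y y' hy hy' hyy' hadj
    have hmem : y' ∈ G.neighborFinset y := (G.mem_neighborFinset y y').2 hadj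
    rw [← Finset.add_sum_erase _ _ hmem]
    have hrest : ∀ j ∈ (G.neighborFinset y).erase y', z y j = 1 := by
      intro j hj
      have hjy' : j ≠ y' := Finset.ne_of_mem_erase hj
      have hadjj : G.Adj y j := (G.mem_neighborFinset y j).1 (Finset.mem_of_mem_erase hj)
      have hjy : j ≠ y := hadjj.ne'
      have hju : j ≠ u := by
        rcases hy with rfl | rfl
        · exact hjy
        · rcases hy' with rfl | rfl
          · exact hjy'
          · exact absurd rfl hyy'
      have hjv : j ≠ v := by
        rcases hy with rfl | rfl
        · rcases hy' with rfl | rfl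
          · exact absurd rfl hyy'
          · exact hjy'
        · exact hjy
      have hmem1 := hz1 y j hadjj
      rw [hx1 y hy, hx0 j hju hjv, sub_zero, sgn_one'] at hmem1
      exact hmem1
    rw [Finset.sum_congr rfl hrest, Finset.sum_const, Finset.card_erase_of_mem hmem,
      SimpleGraph.card_neighborFinset_eq_degree, nsmul_eq_mul, mul_one]
    have hd1 : 1 ≤ G.degree y := by
      rcases hy with rfl | rfl; exact hdu; exact hdv
    push_cast [hd1]
    ring
  have hEu := hz3 u
  rw [hconv u, hSvert u v (Or.inl rfl) (Or.inr rfl) hne huv,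
    hx1 u (Or.inl rfl), sgn_one', Set.image_singleton, Set.mem_singleton_iff] at hEu
  have hEv := hz3 v
  rw [hconv v, hSvert v u (Or.inr rfl) (Or.inl rfl) hne.symm huv.symm,
    hx1 v (Or.inr rfl), sgn_one', Set.image_singleton, Set.mem_singleton_iff] at hEv
  have hanti : z u v = -z v u := hz2 u v huv
  -- lam * D = D - 2
  have hlamD : lam * ((G.degree u : ℝ) + (G.degree v : ℝ))
      = (G.degree u : ℝ) + (G.degree v : ℝ) - 2 := by
    have h1 : z u v + ((G.degree u : ℝ) - 1) = lam * (G.degree u : ℝ) * 1 := hEu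
    have h2 : z v u + ((G.degree v : ℝ) - 1) = lam * (G.degree v : ℝ) * 1 := hEv
    nlinarith [hanti]
  have hdu1 : (1:ℝ) ≤ (G.degree u : ℝ) := by exact_mod_cast hdu
  have hdv1 : (1:ℝ) ≤ (G.degree v : ℝ) := by exact_mod_cast hdv
  have hD0 : (0:ℝ) < (G.degree u : ℝ) + (G.degree v : ℝ) := by linarith
  have hlam0 : 0 ≤ lam := by nlinarith
  have hlam1 : lam < 1 := by nlinarith
  -- now the isolated vertex
  intro w hw1 hw2
  by_contra hbad
  push_neg at hbad
  have hdw : 0 < G.degree w := by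
    obtain ⟨p⟩ := hconn.preconnected w u
    cases p with
    | nil => exact absurd rfl hw1
    | cons h q => exact (G.degree_pos_iff_exists_adj w).2 ⟨_, h⟩
  have hall : ∀ j ∈ G.neighborFinset w, z w j = -1 := by
    intro j hj
    have hadj : G.Adj w j := (G.mem_neighborFinset w j).1 hj
    have hj2 : j = u ∨ j = v := by
      by_contra hcon
      push_neg at hcon
      exact hbad j hcon.1 hcon.2 hadj
    have hmem1 := hz1 w j hadj
    rw [hx0 w hw1 hw2, hx1 j hj2] at hmem1
    have : (0:ℝ) - 1 = -1 := by norm_num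
    rw [this, sgn_negone'] at hmem1
    exact hmem1
  have hEw := hz3 w
  rw [hconv w, Finset.sum_congr rfl hall, Finset.sum_const,
    SimpleGraph.card_neighborFinset_eq_degree, nsmul_eq_mul] at hEw
  rw [hx0 w hw1 hw2, sgn_zero'] at hEw
  obtain ⟨s, hs, hseq⟩ := hEw
  have hdw1 : (0:ℝ) < (G.degree w : ℝ) := by exact_mod_cast hdw
  have hseq' : lam * s = -1 := by
    have h3 : (lam * s) * (G.degree w : ℝ) = (-1) * (G.degree w : ℝ) := by
      linear_combination hseq
    exact mul_right_cancel₀ hdw1.ne' h3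
  obtain ⟨hs1, hs2⟩ := hs
  nlinarith


end Stmt18Aux

/-- **`1_{\{u,v\}}` is a `Δ_1`-eigenvector iff the subgraph induced on the complement has
no isolated vertex; in that case the eigenvalue is `1 - 2/(deg(u)+deg(v))`.** -/
theorem stmt18 {n : ℕ} (G : SimpleGraph (Fin n)) [DecidableRel G.Adj]
    (hconn : G.Connected) (u v : Fin n) (huv : G.Adj u v) :
    ((∃ lam : ℝ, IsEigenpair1 G lam (fun i => if i = u ∨ i = v then (1 : ℝ) else 0)) ↔
      ∀ w, w ≠ u → w ≠ v → ∃ w', w' ≠ u ∧ w' ≠ v ∧ G.Adj w w') ∧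
    ((∀ w, w ≠ u → w ≠ v → ∃ w', w' ≠ u ∧ w' ≠ v ∧ G.Adj w w') →
      IsEigenpair1 G (1 - 2 / ((G.degree u : ℝ) + (G.degree v : ℝ)))
        (fun i => if i = u ∨ i = v then (1 : ℝ) else 0)) := by
  constructor
  · constructor
    · rintro ⟨lam, hl⟩
      exact converse G hconn u v huv lam hl
    · intro hiso
      exact ⟨_, construction G u v huv hiso⟩
  · intro hiso
    exact construction G u v huv hiso
end
end
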